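/- arXiv:1708.06462 — 8 statements merged into one kernel-verified Lean document; each statement's English description precedes it below -/
import Mathlib

section
/- For any word w of length n over a finite alphabet, and for any position i in [1..n], the number of distinct squares whose last (rightmost) occurrence in w begins at position i is at most 2. -/
variable {α : Type*}

/-- `x` occurs in `w` beginning at (1-indexed) position `i`. -/
def OccursAt (x w : List α) (i : ℕ) : Prop :=
  ∃ u v : List α, w = u ++ x ++ v ∧ u.length + 1 = i

/-- The last (rightmost) occurrence of `x` in `w` begins at position `i`. -/
def LastOccAt (x w : List α) (i : ℕ) : Prop :=
  OccursAt x w i ∧ ∀ j, OccursAt x w j → j ≤ i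

/-- `e`-fold concatenation of the word `v`. -/
def listPow (v : List α) (e : ℕ) : List α :=
  (List.replicate e v).flatten

/-- A word is primitive if it is nonempty and not a nontrivial power. -/
def Primitive (w : List α) : Prop :=
  w ≠ [] ∧ ∀ (v : List α) (e : ℕ), 2 ≤ e → w ≠ listPow v e

/-- The set of distinct squares occurring in `w`. -/
def squareSet (w : List α) : Set (List α) :=
  {x | ∃ u : List α, u ≠ [] ∧ x = u ++ u ∧ x <:+: w}

/-- The number of distinct squares whose last occurrence in `w` begins at position `i`. -/
noncomputable def sCount (w : List α) (i : ℕ) : ℕ :=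
  {u : List α | u ≠ [] ∧ LastOccAt (u ++ u) w i}.ncard

/-!
All squares whose last occurrence begins at position `i` are prefixes of the suffix `S` of `w`
starting there, so they are nested and determined by their lengths. Take three of them,
`xx`, `yy`, `zz` with `|x| < |y| < |z|` (the three-squares lemma of Fraenkel and Simpson). If
`2|x| ≤ |z|`, then `xx` occurs again inside the second `z`. Otherwise `x` has period `|y| - |x|`
and `y` has period `|z| - |y|`; these sum to at most `|x|`, so the period `|y| - |x|` of the prefix
`x` of `y` spreads to all of `y`, and then `xx` occurs again at offset `|y| - |x|`. Either way the
occurrence of `xx` at `i` is not the last one.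
-/

namespace List

theorem hasPeriod_append_self (x : List α) : (x ++ x).HasPeriod x.length := by
  rw [HasPeriod, take_left]
  exact (prefix_append_right_inj x).2 (prefix_append x x)

theorem HasPeriod.of_take {w : List α} {t p n : ℕ} (ht : w.HasPeriod t)
    (hp : (w.take n).HasPeriod p) (ht0 : 0 < t) (hn : t + p ≤ n) : w.HasPeriod p := by
  rw [hasPeriod_iff_getElem?] at ht hp ⊢
  intro i
  induction i using Nat.strong_induction_on with
  | _ i ih =>
    intro hi
    rcases lt_or_ge (i + p) n with hin | hin
    · have := hp i (by simp only [length_take]; omega)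
      rwa [getElem?_take_of_lt (by omega), getElem?_take_of_lt hin] at this
    · calc w[i]? = w[i - t + t]? := by rw [Nat.sub_add_cancel (by omega)]
        _ = w[i - t]? := (ht _ (by omega)).symm
        _ = w[i - t + p]? := ih _ (by omega) (by omega)
        _ = w[i - t + p + t]? := ht _ (by omega)
        _ = w[i + p]? := by congr 1; omega

theorem hasPeriod_tsub_of_append_self_prefix {x y : List α} (h : x ++ x <+: y ++ y) :
    x.HasPeriod (y.length - x.length) := by
  have hxy : x.length ≤ y.length := by
    have := h.length_le
    simp only [length_append] at this
    omega
  have hper : (x ++ x).HasPeriod (y.length - x.length + x.length) := by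
    rw [Nat.sub_add_cancel hxy]
    exact (hasPeriod_append_self y).infix h.isInfix
  simpa using (hasPeriod_append_self x).drop_of_hasPeriod_add hper

theorem append_self_prefix_drop_of_hasPeriod {x y : List α} (hxy : x <+: y)
    (hy : y.HasPeriod (y.length - x.length)) :
    x ++ x <+: (y ++ y).drop (y.length - x.length) := by
  have hlen := hxy.length_le
  have hdrop : y.drop (y.length - x.length) = x :=
    (prefix_of_prefix_length_le (hy.drop_prefix _) hxy
      (by simp only [length_drop]; omega)).eq_of_length (by simp only [length_drop]; omega)
  rw [drop_append_of_le_length (by omega), hdrop]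
  exact (prefix_append_right_inj x).2 hxy

theorem exists_append_self_prefix_drop_of_three_squares {x y z : List α}
    (hxy : x ++ x <+: y ++ y) (hyz : y ++ y <+: z ++ z)
    (hlt₁ : x.length < y.length) (hlt₂ : y.length < z.length) :
    ∃ s, 0 < s ∧ x ++ x <+: (z ++ z).drop s := by
  rcases le_or_gt (2 * x.length) z.length with hz | hz
  · refine ⟨z.length, by omega, ?_⟩
    rw [drop_left]
    exact prefix_of_prefix_length_le (hxy.trans hyz) (prefix_append z z)
      (by simp only [length_append]; omega)
  · refine ⟨y.length - x.length, by omega, (?_ : _ <+: _).trans (hyz.drop _)⟩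
    have hx : x <+: y :=
      prefix_of_prefix_length_le ((prefix_append x x).trans hxy) (prefix_append y y) hlt₁.le
    refine append_self_prefix_drop_of_hasPeriod hx
      ((hasPeriod_tsub_of_append_self_prefix hyz).of_take (n := x.length) ?_ (by omega) (by omega))
    rw [← prefix_iff_eq_take.1 hx]
    exact hasPeriod_tsub_of_append_self_prefix hxy

end List

open List

theorem Set.ncard_le_two_of_forall_not_lt_lt {γ : Type*} [LinearOrder γ] {t : Set γ}
    (h : ∀ a ∈ t, ∀ b ∈ t, ∀ c ∈ t, a < b → ¬ b < c) : t.ncard ≤ 2 := by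
  by_contra! hlt
  have hfin := Set.finite_of_ncard_pos (by omega : 0 < t.ncard)
  rw [Set.ncard_eq_toFinset_card t hfin] at hlt
  let e := hfin.toFinset.orderEmbOfFin rfl
  have he : ∀ k, e k ∈ t := fun k => hfin.mem_toFinset.1 (Finset.orderEmbOfFin_mem _ rfl k)
  exact h _ (he ⟨0, by omega⟩) _ (he ⟨1, by omega⟩) _ (he ⟨2, by omega⟩)
    (e.strictMono (by simp)) (e.strictMono (by simp))

section LastOccurrence

variable {x w : List α} {i : ℕ}

theorem occursAt_of_prefix_drop {k : ℕ} (hx : x ≠ []) (h : x <+: w.drop k) :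
    OccursAt x w (k + 1) := by
  obtain ⟨v, hv⟩ := h
  have hk : k < w.length := by
    by_contra hk
    simp [drop_eq_nil_of_le (not_lt.1 hk), hx] at hv
  exact ⟨w.take k, v, by rw [append_assoc, hv, take_append_drop],
    by simp only [length_take]; omega⟩

theorem LastOccAt.prefix_drop (h : LastOccAt x w i) : x <+: w.drop (i - 1) := by
  obtain ⟨⟨u, v, rfl, rfl⟩, -⟩ := h
  rw [Nat.add_sub_cancel, append_assoc, drop_left]
  exact prefix_append x v

theorem LastOccAt.eq_zero_of_prefix_drop {s : ℕ} (h : LastOccAt x w i) (hx : x ≠ [])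
    (hs : x <+: (w.drop (i - 1)).drop s) : s = 0 := by
  obtain ⟨⟨u, v, -, hi⟩, hlast⟩ := h
  rw [drop_drop] at hs
  have := hlast _ (occursAt_of_prefix_drop hx hs)
  omega

end LastOccurrence

theorem stmt0_general {α : Type*} (w : List α) (i : ℕ) :
    sCount w i ≤ 2 := by
  set T := {u : List α | u ≠ [] ∧ LastOccAt (u ++ u) w i}
  have hpre : ∀ u ∈ T, u ++ u <+: w.drop (i - 1) := fun u hu => hu.2.prefix_drop
  have hnest : ∀ u ∈ T, ∀ v ∈ T, u.length ≤ v.length → u ++ u <+: v ++ v :=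
    fun u hu v hv h => prefix_of_prefix_length_le (hpre u hu) (hpre v hv)
      (by simp only [length_append]; omega)
  have hinj : Set.InjOn length T := fun u hu v hv h =>
    (prefix_of_prefix_length_le ((prefix_append u u).trans (hpre u hu))
      ((prefix_append v v).trans (hpre v hv)) h.le).eq_of_length h
  rw [sCount, ← hinj.ncard_image]
  refine Set.ncard_le_two_of_forall_not_lt_lt ?_
  rintro _ ⟨x, hx, rfl⟩ _ ⟨y, hy, rfl⟩ _ ⟨z, hz, rfl⟩ hxy hyz
  obtain ⟨s, hs, hocc⟩ :=
    exists_append_self_prefix_drop_of_three_squares (hnest x hx y hy hxy.le)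
      (hnest y hy z hz hyz.le) hxy hyz
  exact hs.ne' (hx.2.eq_zero_of_prefix_drop (by simp [hx.1]) (hocc.trans ((hpre z hz).drop s)))

/-- At most two distinct squares have their last occurrence beginning at any position. -/
theorem stmt0 {α : Type*} [Fintype α] (w : List α) (i : ℕ)
    (h1 : 1 ≤ i) (h2 : i ≤ w.length) :
    sCount w i ≤ 2 :=
  stmt0_general w i
end

section
/- A nonempty word w is primitive (i.e., not a nontrivial power v^e with e ≥ 2) if and only if w is not an interior factor of ww, i.e., ww = xwy implies x = ε or y = ε. -/
variable {α : Type*}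

/-
If `w ++ w = x ++ w ++ y`, comparing lengths and prefixes gives `w = x ++ y` and
`x ++ y = y ++ x`; two commuting words are powers of a common word, so for nonempty `x`, `y`
the word `w` is a proper power. Conversely, if `w = v ^ e` with `e ≥ 2`, then `w` occurs in
`w ++ w` after the nonempty prefix `v`, followed by the nonempty suffix `v ^ (e - 1)`.
-/

theorem listPow_add (v : List α) (k m : ℕ) :
    listPow v (k + m) = listPow v k ++ listPow v m := by
  rw [listPow, listPow, listPow, List.replicate_add, List.flatten_append]

theorem listPow_one (v : List α) : listPow v 1 = v := by
  simp [listPow]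

theorem listPow_eq_nil_iff {v : List α} {e : ℕ} : listPow v e = [] ↔ e = 0 ∨ v = [] := by
  simp [listPow, List.flatten_eq_nil_iff, or_iff_not_imp_left]

theorem exists_listPow_of_append_comm (a b : List α) (h : a ++ b = b ++ a) :
    ∃ t k m, a = listPow t k ∧ b = listPow t m := by
  induction hn : a.length + b.length using Nat.strong_induction_on generalizing a b with
  | _ n ih =>
  wlog hle : a.length ≤ b.length generalizing a b
  · obtain ⟨t, k, m, hb, ha⟩ := this b a h.symm (by omega) (by omega)
    exact ⟨t, m, k, ha, hb⟩
  rcases eq_or_ne a [] with rfl | ha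
  · exact ⟨b, 0, 1, rfl, (listPow_one b).symm⟩
  obtain ⟨c, rfl⟩ : a <+: b :=
    List.prefix_of_prefix_length_le (h ▸ List.prefix_append a b) (List.prefix_append b a) hle
  have hc : a ++ c = c ++ a :=
    List.append_cancel_left (as := a) (by simpa only [List.append_assoc] using h)
  have hlt : a.length + c.length < n := by
    have := List.length_pos_iff.2 ha
    simp only [List.length_append] at hn
    omega
  obtain ⟨t, k, m, rfl, rfl⟩ := ih _ hlt a c hc rfl
  exact ⟨t, k, k + m, rfl, (listPow_add t k m).symm⟩

theorem not_primitive_of_append_comm {x y : List α} (hx : x ≠ []) (hy : y ≠ [])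
    (h : x ++ y = y ++ x) : ¬ Primitive (x ++ y) := by
  rintro ⟨-, hprim⟩
  obtain ⟨t, k, m, rfl, rfl⟩ := exists_listPow_of_append_comm x y h
  have hk : k ≠ 0 := fun hk => hx (listPow_eq_nil_iff.2 (Or.inl hk))
  have hm : m ≠ 0 := fun hm => hy (listPow_eq_nil_iff.2 (Or.inl hm))
  exact hprim t (k + m) (by omega) (listPow_add t k m).symm

theorem eq_append_and_append_comm_of_append_self_eq {w x y : List α}
    (h : w ++ w = x ++ w ++ y) : w = x ++ y ∧ x ++ y = y ++ x := by
  have hlen : x.length + y.length = w.length := by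
    have := congrArg List.length h
    simp only [List.length_append] at this
    omega
  obtain ⟨z, rfl⟩ : x <+: w :=
    List.prefix_of_prefix_length_le (h ▸ (List.prefix_append x w).trans (List.prefix_append _ y))
      (List.prefix_append w w) (by omega)
  have h' : (z ++ x) ++ z = (x ++ z) ++ y :=
    List.append_cancel_left (as := x) (by simpa only [List.append_assoc] using h)
  obtain ⟨hcomm, rfl⟩ := List.append_inj' h' (by simp only [List.length_append] at hlen; omega)
  exact ⟨rfl, hcomm.symm⟩

theorem listPow_succ_append_self (v : List α) (e : ℕ) :
    listPow v (e + 1) ++ listPow v (e + 1) = v ++ listPow v (e + 1) ++ listPow v e := by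
  rw [← listPow_add, show e + 1 + (e + 1) = 1 + (e + 1) + e by omega, listPow_add, listPow_add,
    listPow_one]

/-- A nonempty word is primitive iff it is not an interior factor of its square. -/
theorem stmt1 {α : Type*} (w : List α) (hw : w ≠ []) :
    Primitive w ↔ ∀ x y : List α, w ++ w = x ++ w ++ y → x = [] ∨ y = [] := by
  constructor
  · intro hprim x y h
    obtain ⟨rfl, hcomm⟩ := eq_append_and_append_comm_of_append_self_eq h
    by_contra! hxy
    exact not_primitive_of_append_comm hxy.1 hxy.2 hcomm hprim
  · refine fun h => ⟨hw, ?_⟩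
    rintro v e he rfl
    obtain ⟨f, rfl⟩ : ∃ f, e = f + 1 + 1 := ⟨e - 2, by omega⟩
    have hv : v ≠ [] := fun hv => hw (listPow_eq_nil_iff.2 (Or.inr hv))
    rcases h v _ (listPow_succ_append_self v (f + 1)) with hv' | hpow
    · exact hv hv'
    · exact (listPow_eq_nil_iff.1 hpow).elim (Nat.succ_ne_zero f) hv
end

section
/- Let m ≥ 1 and w_m = (a^{m-1} b a a^{m-1} b a^{m-1} b a)^2 a^{m-1} over alphabet {a,b}. For every i in [1..m], both the square u_i^2 with u_i = a^{m-i} b a a^{m-1} b a^{i-1} (of length 2m+1) and the square U_i^2 with U_i = a^{m-i} b a a^{m-1} b a^{m-1} b a^i (of length 3m+2) occur in w_m at position i, and neither u_i^2 nor U_i^2 occurs in w_m at any position greater than i. -/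
variable {α : Type*}

/-- The word U₁ = a^{m-1} b a a^{m-1} b a^{m-1} b a. -/
def bigU (a b : α) (m : ℕ) : List α :=
  List.replicate (m-1) a ++ [b, a] ++ List.replicate (m-1) a ++ [b] ++
    List.replicate (m-1) a ++ [b, a]

/-- The word wₘ = (a^{m-1} b a a^{m-1} b a^{m-1} b a)² a^{m-1}. -/
def wm (a b : α) (m : ℕ) : List α :=
  bigU a b m ++ bigU a b m ++ List.replicate (m-1) a

/-- uᵢ = a^{m-i} b a a^{m-1} b a^{i-1}. -/
def ui (a b : α) (m i : ℕ) : List α :=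
  List.replicate (m-i) a ++ [b, a] ++ List.replicate (m-1) a ++ [b] ++
    List.replicate (i-1) a

/-- Uᵢ = a^{m-i} b a a^{m-1} b a^{m-1} b a^i. -/
def Ui (a b : α) (m i : ℕ) : List α :=
  List.replicate (m-i) a ++ [b, a] ++ List.replicate (m-1) a ++ [b] ++
    List.replicate (m-1) a ++ [b] ++ List.replicate i a

/-!
Every word here has the shape `a^{k₀} b a^{k₁} b ⋯ a^{kₙ₋₁} b a^t`, so it is determined by its
length and the positions of its `b`s, and an occurrence of one such word inside another aligns
these `b`-positions. In `wₘ` the gaps between consecutive `b`s are `m+1, m, m+1, m+1, m`, and in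
`uᵢ²` they are `m+1, m, m+1`; this pattern occurs only at the start of `wₘ`, which pins the
occurrence of `uᵢ²` to position `i`. The square `Uᵢ²` has length `6m+4` and `wₘ` has length
`7m+3`, so `Uᵢ²` starts at a position `j ≤ m`; for `j > i` one of its leading `a`s would cover the
first `b` of `wₘ`, at position `m`.
-/

theorem OccursAt.exists_getElem? {x w : List α} {j : ℕ} (h : OccursAt x w j) :
    ∃ p, j = p + 1 ∧ p + x.length ≤ w.length ∧ ∀ k < x.length, w[p + k]? = x[k]? := by
  obtain ⟨u, v, rfl, rfl⟩ := h
  refine ⟨u.length, rfl, by simp, fun k hk => ?_⟩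
  rw [List.append_assoc, List.getElem?_append_right (by omega), Nat.add_sub_cancel_left,
    List.getElem?_append_left hk]

namespace GapWord

variable (a b : α)

/-- `gapWord a b [k₀, …, kₙ₋₁] t = a^{k₀} b a^{k₁} b ⋯ a^{kₙ₋₁} b a^t`. -/
def gapWord : List ℕ → ℕ → List α
  | [], t => List.replicate t a
  | k :: ks, t => List.replicate k a ++ b :: gapWord ks t

/-- The positions of the `b`s in `gapWord a b ks t`, counted from 0 (unlike `OccursAt`). -/
def bPositions : List ℕ → List ℕ
  | [] => []
  | k :: ks => k :: (bPositions ks).map (· + (k + 1))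

@[simp]
theorem gapWord_nil (t : ℕ) : gapWord a b [] t = List.replicate t a := rfl

@[simp]
theorem gapWord_cons (k : ℕ) (ks : List ℕ) (t : ℕ) :
    gapWord a b (k :: ks) t = List.replicate k a ++ b :: gapWord a b ks t := rfl

@[simp]
theorem bPositions_nil : bPositions [] = [] := rfl

@[simp]
theorem bPositions_cons (k : ℕ) (ks : List ℕ) :
    bPositions (k :: ks) = k :: (bPositions ks).map (· + (k + 1)) := rfl

theorem replicate_append_gapWord_cons (j k : ℕ) (ks : List ℕ) (t : ℕ) :
    List.replicate j a ++ gapWord a b (k :: ks) t = gapWord a b ((j + k) :: ks) t := by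
  rw [gapWord_cons, gapWord_cons, ← List.append_assoc, List.replicate_append_replicate]

theorem gapWord_append_replicate (ks : List ℕ) (t s : ℕ) :
    gapWord a b ks t ++ List.replicate s a = gapWord a b ks (t + s) := by
  induction ks with
  | nil => exact List.replicate_append_replicate
  | cons k ks ih => simp [ih]

theorem gapWord_append_gapWord_cons (ks : List ℕ) (t k : ℕ) (ks' : List ℕ) (t' : ℕ) :
    gapWord a b ks t ++ gapWord a b (k :: ks') t' = gapWord a b (ks ++ (t + k) :: ks') t' := by
  induction ks with
  | nil => exact replicate_append_gapWord_cons a b t k ks' t'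
  | cons j ks ih => simp [← ih]

theorem length_gapWord (ks : List ℕ) (t : ℕ) :
    (gapWord a b ks t).length = ks.sum + ks.length + t := by
  induction ks with
  | nil => simp
  | cons k ks ih => simp [ih]; omega

variable {a b}

theorem getElem?_gapWord_eq_some_iff (hab : a ≠ b) (ks : List ℕ) (t n : ℕ) :
    (gapWord a b ks t)[n]? = some b ↔ n ∈ bPositions ks := by
  induction ks generalizing n with
  | nil => simp [List.getElem?_replicate, hab]
  | cons k ks ih =>
    rcases lt_trichotomy n k with h | rfl | h
    · rw [gapWord_cons, List.getElem?_append_left (by simpa using h)]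
      simp only [List.getElem?_replicate, h, if_true, Option.some.injEq, hab, false_iff]
      simp only [bPositions_cons, List.mem_cons, List.mem_map]
      omega
    · simp
    · obtain ⟨r, rfl⟩ := Nat.exists_eq_add_of_lt h
      rw [gapWord_cons, List.getElem?_append_right (by simp; omega)]
      simp [show k + r + 1 - k = r + 1 by omega, ih,
        show ∀ x, x + (k + 1) = k + r + 1 ↔ x = r from fun x => by omega]
      omega

theorem exists_shift_of_occursAt (hab : a ≠ b) {ks ks' : List ℕ} {t t' j : ℕ}
    (h : OccursAt (gapWord a b ks t) (gapWord a b ks' t') j) :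
    ∃ p, j = p + 1 ∧ p + (ks.sum + ks.length + t) ≤ ks'.sum + ks'.length + t' ∧
      ∀ k < ks.sum + ks.length + t,
        (p + k ∈ bPositions ks' ↔ k ∈ bPositions ks) := by
  obtain ⟨p, rfl, hlen, hmatch⟩ := h.exists_getElem?
  simp only [length_gapWord] at hlen hmatch
  refine ⟨p, rfl, hlen, fun k hk => ?_⟩
  rw [← getElem?_gapWord_eq_some_iff hab, ← getElem?_gapWord_eq_some_iff hab,
    hmatch k hk]

end GapWord

section Words

open GapWord

variable (a b : α) {m i : ℕ}

theorem replicate_eq_cons_replicate_pred (hm : 1 ≤ m) :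
    List.replicate m a = a :: List.replicate (m - 1) a := by
  rw [← List.replicate_succ, Nat.sub_add_cancel hm]

theorem wm_eq_gapWord (hm : 1 ≤ m) : wm a b m = gapWord a b [m-1, m, m-1, m, m, m-1] m := by
  have hU : bigU a b m = gapWord a b [m-1, m, m-1] 1 := by
    simp [bigU, replicate_eq_cons_replicate_pred a hm]
  rw [wm, List.append_assoc, hU, gapWord_append_replicate, gapWord_append_gapWord_cons,
    Nat.add_sub_cancel' hm]
  rfl

theorem ui_sq_eq_gapWord (hi : 1 ≤ i) (him : i ≤ m) :
    ui a b m i ++ ui a b m i = gapWord a b [m-i, m, m-1, m] (i-1) := by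
  have hu : ui a b m i = gapWord a b [m-i, m] (i-1) := by
    simp [ui, replicate_eq_cons_replicate_pred a (hi.trans him)]
  rw [hu, gapWord_append_gapWord_cons, show i - 1 + (m - i) = m - 1 by omega]
  rfl

theorem Ui_sq_eq_gapWord (hi : 1 ≤ i) (him : i ≤ m) :
    Ui a b m i ++ Ui a b m i = gapWord a b [m-i, m, m-1, m, m, m-1] i := by
  have hU : Ui a b m i = gapWord a b [m-i, m, m-1] i := by
    simp [Ui, replicate_eq_cons_replicate_pred a (hi.trans him)]
  rw [hU, gapWord_append_gapWord_cons, show i + (m - i) = m by omega]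
  rfl

theorem bPositions_wm (hm : 1 ≤ m) :
    bPositions [m-1, m, m-1, m, m, m-1] = [m-1, 2*m, 3*m, 4*m+1, 5*m+2, 6*m+2] := by
  simp
  omega

theorem bPositions_ui_sq (hi : 1 ≤ i) (him : i ≤ m) :
    bPositions [m-i, m, m-1, m] = [m-i, 2*m+1-i, 3*m+1-i, 4*m+2-i] := by
  simp
  omega

theorem occursAt_ui_sq (hi : 1 ≤ i) (him : i ≤ m) :
    OccursAt (ui a b m i ++ ui a b m i) (wm a b m) i := by
  refine ⟨List.replicate (i-1) a, gapWord a b [m+1-i, m-1] m, ?_, by simp; omega⟩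
  rw [wm_eq_gapWord a b (hi.trans him), ui_sq_eq_gapWord a b hi him, List.append_assoc,
    gapWord_append_gapWord_cons, show i - 1 + (m + 1 - i) = m by omega,
    List.cons_append, replicate_append_gapWord_cons, show i - 1 + (m - i) = m - 1 by omega]
  rfl

theorem occursAt_Ui_sq (hi : 1 ≤ i) (him : i ≤ m) :
    OccursAt (Ui a b m i ++ Ui a b m i) (wm a b m) i := by
  refine ⟨List.replicate (i-1) a, List.replicate (m-i) a, ?_, by simp; omega⟩
  rw [wm_eq_gapWord a b (hi.trans him), Ui_sq_eq_gapWord a b hi him, List.append_assoc,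
    gapWord_append_replicate, show i + (m - i) = m by omega,
    replicate_append_gapWord_cons, show i - 1 + (m - i) = m - 1 by omega]

variable {a b}

theorem not_occursAt_ui_sq_of_lt (hab : a ≠ b) (hi : 1 ≤ i) (him : i ≤ m) {j : ℕ} (hij : i < j) :
    ¬ OccursAt (ui a b m i ++ ui a b m i) (wm a b m) j := by
  intro h
  rw [wm_eq_gapWord a b (hi.trans him), ui_sq_eq_gapWord a b hi him] at h
  obtain ⟨p, rfl, hlen, hb⟩ := exists_shift_of_occursAt hab h
  simp only [List.sum_cons, List.sum_nil, List.length_cons, List.length_nil] at hlen hb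
  rw [bPositions_wm (hi.trans him), bPositions_ui_sq hi him] at hb
  simp only [List.mem_cons, List.not_mem_nil, or_false] at hb
  have h1 := hb (m - i) (by omega)
  have h2 := hb (2 * m + 1 - i) (by omega)
  have h3 := hb (3 * m + 1 - i) (by omega)
  have h4 := hb (4 * m + 2 - i) (by omega)
  omega

theorem not_occursAt_Ui_sq_of_lt (hab : a ≠ b) (hi : 1 ≤ i) (him : i ≤ m) {j : ℕ} (hij : i < j) :
    ¬ OccursAt (Ui a b m i ++ Ui a b m i) (wm a b m) j := by
  intro h
  rw [wm_eq_gapWord a b (hi.trans him), Ui_sq_eq_gapWord a b hi him] at h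
  obtain ⟨p, rfl, hlen, hb⟩ := exists_shift_of_occursAt hab h
  simp only [List.sum_cons, List.sum_nil, List.length_cons, List.length_nil] at hlen hb
  have h1 := hb (m - 1 - p) (by omega)
  simp only [bPositions_cons, bPositions_nil, List.map_cons, List.map_nil, List.mem_cons,
    List.not_mem_nil, or_false] at h1
  omega

end Words

theorem stmt6_general {α : Type*} (a b : α) (hab : a ≠ b) (m : ℕ) :
    ∀ i : ℕ, 1 ≤ i → i ≤ m →
      (ui a b m i).length = 2 * m + 1 ∧
      (Ui a b m i).length = 3 * m + 2 ∧
      OccursAt (ui a b m i ++ ui a b m i) (wm a b m) i ∧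
      OccursAt (Ui a b m i ++ Ui a b m i) (wm a b m) i ∧
      (∀ j : ℕ, i < j → ¬ OccursAt (ui a b m i ++ ui a b m i) (wm a b m) j) ∧
      (∀ j : ℕ, i < j → ¬ OccursAt (Ui a b m i ++ Ui a b m i) (wm a b m) j) := by
  intro i hi him
  refine ⟨?_, ?_, occursAt_ui_sq a b hi him, occursAt_Ui_sq a b hi him,
    fun j => not_occursAt_ui_sq_of_lt hab hi him, fun j => not_occursAt_Ui_sq_of_lt hab hi him⟩
  · simp [ui]
    omega
  · simp [Ui]
    omega

/-- For each i ∈ [1..m], the squares uᵢ² (length 2(2m+1)) and Uᵢ² (length 2(3m+2))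
    occur in wₘ at position i and at no later position. -/
theorem stmt6 {α : Type*} (a b : α) (hab : a ≠ b) (m : ℕ) (hm : 1 ≤ m) :
    ∀ i : ℕ, 1 ≤ i → i ≤ m →
      (ui a b m i).length = 2 * m + 1 ∧
      (Ui a b m i).length = 3 * m + 2 ∧
      OccursAt (ui a b m i ++ ui a b m i) (wm a b m) i ∧
      OccursAt (Ui a b m i ++ Ui a b m i) (wm a b m) i ∧
      (∀ j : ℕ, i < j → ¬ OccursAt (ui a b m i ++ ui a b m i) (wm a b m) j) ∧
      (∀ j : ℕ, i < j → ¬ OccursAt (Ui a b m i ++ Ui a b m i) (wm a b m) j) :=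
  stmt6_general a b hab m
end

section
/- Let m ≥ 1 and let w be a word of length 7m+3 over an alphabet such that for every i in [1..m], there exist two squares of lengths 4m+2 and 6m+4 respectively whose last occurrences in w both begin at position i. Then, up to a renaming of letters, w = (a^{m-1} b a a^{m-1} b a^{m-1} b a)^2 a^{m-1} for distinct letters a and b. -/
/-!
The squares of half-length `3m + 2` starting at positions `1, …, m` give `w` the period `3m + 2`,
and those of half-length `2m + 1` give its prefix of length `5m + 1` the period `2m + 1`.
Subtracting one period from the other yields periods `m + 1` and `m` on shorter prefixes; these
force the first `3m + 2` letters to be `U₁` over the letters `w[m]` and `w[m-1]`, and the period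
`3m + 2` propagates this to `w = wₘ`. The two letters differ because in a unary word the last
occurrence of a square of length `4m + 2` does not start at position `1`.
-/

variable {α : Type*}

namespace List

lemma hasPeriod_take_iff {w : List α} {p n : ℕ} (hn : n ≤ w.length) :
    (w.take n).HasPeriod p ↔ ∀ k, k + p < n → w[k]? = w[k + p]? := by
  rw [hasPeriod_iff_getElem?, length_take, min_eq_left hn]
  refine forall_congr' fun k => ⟨fun h hk => ?_, fun h hk => ?_⟩
  · simpa only [getElem?_take, if_pos (show k < n by omega), if_pos hk] using h (by omega)
  · simpa only [getElem?_take, if_pos (show k < n by omega), if_pos (show k + p < n by omega)]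
      using h (by omega)

lemma HasPeriod.take_of_add {w : List α} {p q : ℕ} (hpq : w.HasPeriod (p + q))
    (hq : w.HasPeriod q) : (w.take (w.length - q)).HasPeriod p := by
  rw [hasPeriod_take_iff (by omega)]
  rw [hasPeriod_iff_getElem?] at hpq hq
  intro k hk
  rw [hpq k (by omega), hq (k + p) (by omega), add_assoc]

lemma HasPeriod.eq_of_take_eq {w v : List α} {p : ℕ} (hp : 0 < p) (hw : w.HasPeriod p)
    (hv : v.HasPeriod p) (hlen : w.length = v.length) (htake : w.take p = v.take p) : w = v := by
  refine ext_getElem? fun k => ?_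
  by_cases hk : k < w.length
  · have hmod : w[k % p]? = v[k % p]? := by
      have := congrArg (·[k % p]?) htake
      simpa only [getElem?_take, if_pos (Nat.mod_lt k hp)] using this
    rw [← hw.getElem?_mod p k w hk, ← hv.getElem?_mod p k v (by omega), hmod]
  · rw [getElem?_eq_none (by omega), getElem?_eq_none (by omega)]

end List

open List

lemma OccursAt.getElem?_eq_of_square {x w : List α} {s k : ℕ} (h : OccursAt (x ++ x) w (s + 1))
    (hk : k < x.length) : w[s + k]? = w[s + k + x.length]? := by
  obtain ⟨u, v, rfl, hu⟩ := h
  obtain rfl : u.length = s := by omega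
  rw [add_assoc, add_comm k]
  simp only [append_assoc, getElem?_append_right (Nat.le_add_right _ _),
    Nat.add_sub_cancel_left, getElem?_append_left hk]

lemma hasPeriod_take_of_forall_occursAt_square {w : List α} {m ℓ : ℕ} (hm : 1 ≤ m)
    (h : ∀ i, 1 ≤ i → i ≤ m → ∃ x : List α, x.length = ℓ ∧ OccursAt (x ++ x) w i) :
    (w.take (m + 2 * ℓ - 1)).HasPeriod ℓ := by
  have hlen : m + 2 * ℓ - 1 ≤ w.length := by
    obtain ⟨x, rfl, u, v, rfl, hu⟩ := h m hm le_rfl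
    simp only [length_append]
    omega
  rw [hasPeriod_take_iff hlen]
  intro k hk
  rcases Nat.eq_zero_or_pos ℓ with rfl | hℓ
  · rfl
  obtain ⟨x, rfl, hx⟩ := h (k + 1 - ℓ + 1) (by omega) (by omega)
  have := hx.getElem?_eq_of_square (k := k - (k + 1 - x.length)) (by omega)
  rwa [Nat.add_sub_cancel' (by omega)] at this

lemma getElem?_add_eq_of_periods {w : List α} {p n n' : ℕ}
    (hp : ∀ k, k + p < n → w[k]? = w[k + p]?)
    (hp' : ∀ k, k + (p + 1) < n' → w[k]? = w[k + (p + 1)]?)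
    (hn : n < n') : ∀ j, p + j ≤ n → w[p + j]? = w[p]?
  | 0, _ => rfl
  | j + 1, hj => by
    rw [show p + (j + 1) = j + (p + 1) by omega, ← hp' j (by omega), hp j (by omega), add_comm,
      getElem?_add_eq_of_periods hp hp' hn j (by omega)]

lemma LastOccAt.add_length_of_replicate {x : List α} {n i : ℕ} {a : α}
    (h : LastOccAt x (replicate n a) i) : i + x.length = n + 1 := by
  obtain ⟨⟨u, v, huv, hi⟩, hlast⟩ := h
  have hlen := congrArg length huv
  simp only [length_replicate, length_append] at hlen
  have hx : x = replicate x.length a :=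
    eq_replicate_iff.2 ⟨rfl, fun c hc => eq_of_mem_replicate (by rw [huv]; simp [hc])⟩
  have hend : OccursAt x (replicate n a) (n - x.length + 1) := by
    refine ⟨replicate (n - x.length) a, [], ?_, by simp⟩
    rw [hx, append_nil, ← replicate_add, length_replicate]
    congr 1
    omega
  have := hlast _ hend
  omega

lemma bigU_length (a b : α) {m : ℕ} (hm : 1 ≤ m) : (bigU a b m).length = 3 * m + 2 := by
  simp only [bigU, length_append, length_replicate, length_cons, length_nil]
  omega

lemma bigU_getElem? (a b : α) {m : ℕ} (hm : 1 ≤ m) {k : ℕ} (hk : k < 3 * m + 2) :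
    (bigU a b m)[k]? = some (if k = m - 1 ∨ k = 2 * m ∨ k = 3 * m then b else a) := by
  simp only [bigU, append_assoc, cons_append, nil_append, getElem?_append, getElem?_cons,
    getElem?_replicate, length_replicate]
  split_ifs <;> first | rfl | omega

lemma wm_length (a b : α) {m : ℕ} (hm : 1 ≤ m) : (wm a b m).length = 7 * m + 3 := by
  simp only [wm, length_append, bigU_length a b hm, length_replicate]
  omega

lemma wm_hasPeriod (a b : α) {m : ℕ} : (wm a b m).HasPeriod (bigU a b m).length := by
  have hrep : replicate (m - 1) a <+: bigU a b m := by
    simp only [bigU, append_assoc]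
    exact prefix_append _ _
  rw [HasPeriod, wm, append_assoc, take_left, prefix_append_right_inj, prefix_append_right_inj]
  exact hrep.trans (prefix_append _ _)

lemma wm_self (a : α) {m : ℕ} (hm : 1 ≤ m) : wm a a m = replicate (7 * m + 3) a :=
  eq_replicate_iff.2
    ⟨wm_length a a hm, by simp only [wm, bigU, mem_append, mem_replicate, mem_cons]; grind⟩

/-- The length `5m + 1` is one short of the Fine–Wilf bound for the periods `3m + 2` and `2m + 1`,
so two letters survive. -/
lemma take_eq_bigU_of_hasPeriod {t : List α} {m : ℕ} (hm : 1 ≤ m) (hlen : t.length = 5 * m + 1)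
    (hP : t.HasPeriod (3 * m + 2)) (hQ : t.HasPeriod (2 * m + 1)) {a b : α}
    (ha : t[m]? = some a) (hb : t[m - 1]? = some b) : t.take (3 * m + 2) = bigU a b m := by
  have h₁ : (t.take (3 * m)).HasPeriod (m + 1) := by
    have := HasPeriod.take_of_add (p := m + 1)
      (by rwa [show m + 1 + (2 * m + 1) = 3 * m + 2 by ring]) hQ
    rwa [hlen, show 5 * m + 1 - (2 * m + 1) = 3 * m by omega] at this
  have h₀ : (t.take (2 * m - 1)).HasPeriod m := by
    have hQ' : (t.take (3 * m)).HasPeriod (m + (m + 1)) := by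
      rw [show m + (m + 1) = 2 * m + 1 by ring]
      exact hQ.infix (take_prefix _ _).isInfix
    have := hQ'.take_of_add h₁
    rwa [length_take, take_take, min_eq_left (by omega), min_eq_left (by omega),
      show 3 * m - (m + 1) = 2 * m - 1 by omega] at this
  rw [hasPeriod_iff_getElem?, hlen] at hQ
  rw [hasPeriod_take_iff (by omega)] at h₁ h₀
  have run := getElem?_add_eq_of_periods h₀ h₁ (by omega)
  refine ext_getElem? fun k => ?_
  by_cases hk : k < 3 * m + 2
  swap
  · rw [getElem?_eq_none (by simp; omega), getElem?_eq_none (by rw [bigU_length a b hm]; omega)]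
  rw [getElem?_take, if_pos hk, bigU_getElem? a b hm hk]
  rcases (by omega : k < m - 1 ∨ k = m - 1 ∨ m ≤ k ∧ k < 2 * m ∨ k = 2 * m ∨
      2 * m < k ∧ k < 3 * m ∨ k = 3 * m ∨ k = 3 * m + 1) with
    hk | rfl | hk | rfl | hk | rfl | rfl
  · rw [h₁ k (by omega), show k + (m + 1) = m + (k + 1) by omega, run _ (by omega), ha,
      if_neg (by omega)]
  · rw [hb, if_pos (by omega)]
  · rw [show k = m + (k - m) by omega, run _ (by omega), ha, if_neg (by omega)]
  · rw [show 2 * m = m - 1 + (m + 1) by omega, ← h₁ _ (by omega), hb, if_pos (by omega)]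
  · rw [show k = k - (m + 1) + (m + 1) by omega, ← h₁ _ (by omega),
      show k - (m + 1) = m + (k - (2 * m + 1)) by omega, run _ (by omega), ha, if_neg (by omega)]
  · rw [show 3 * m = m - 1 + (2 * m + 1) by omega, ← hQ _ (by omega), hb, if_pos (by omega)]
  · rw [show 3 * m + 1 = m + (2 * m + 1) by omega, ← hQ _ (by omega), ha, if_neg (by omega)]

/-- If w has length 7m+3 and every position i ∈ [1..m] begins the last occurrences of
    two squares of lengths 4m+2 and 6m+4, then w is wₘ up to a renaming of letters. -/
theorem stmt7 {α : Type*} (m : ℕ) (hm : 1 ≤ m) (w : List α)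
    (hlen : w.length = 7 * m + 3)
    (hfs : ∀ i : ℕ, 1 ≤ i → i ≤ m →
      ∃ x y : List α, x ≠ [] ∧ y ≠ [] ∧
        (x ++ x).length = 4 * m + 2 ∧ (y ++ y).length = 6 * m + 4 ∧
        LastOccAt (x ++ x) w i ∧ LastOccAt (y ++ y) w i) :
    ∃ a b : α, a ≠ b ∧ w = wm a b m := by
  have hP : w.HasPeriod (3 * m + 2) := by
    have := hasPeriod_take_of_forall_occursAt_square (ℓ := 3 * m + 2) hm fun i h₁ h₂ => by
      obtain ⟨-, y, -, -, -, hy, -, hyw⟩ := hfs i h₁ h₂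
      exact ⟨y, by simp only [length_append] at hy; omega, hyw.1⟩
    rwa [show m + 2 * (3 * m + 2) - 1 = w.length by omega, take_length] at this
  have hQ : (w.take (5 * m + 1)).HasPeriod (2 * m + 1) := by
    have := hasPeriod_take_of_forall_occursAt_square (ℓ := 2 * m + 1) hm fun i h₁ h₂ => by
      obtain ⟨x, -, -, -, hx, -, hxw, -⟩ := hfs i h₁ h₂
      exact ⟨x, by simp only [length_append] at hx; omega, hxw.1⟩
    rwa [show m + 2 * (2 * m + 1) - 1 = 5 * m + 1 by omega] at this
  obtain ⟨a, ha⟩ : ∃ a, w[m]? = some a := ⟨_, getElem?_eq_getElem (by omega)⟩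
  obtain ⟨b, hb⟩ : ∃ b, w[m - 1]? = some b := ⟨_, getElem?_eq_getElem (by omega)⟩
  have hprefix := take_eq_bigU_of_hasPeriod hm (by simp; omega)
    (hP.infix (take_prefix _ _).isInfix) hQ
    (by rwa [getElem?_take, if_pos (by omega)]) (by rwa [getElem?_take, if_pos (by omega)])
  have hw : w = wm a b m := by
    refine hP.eq_of_take_eq (by omega) (bigU_length a b hm ▸ wm_hasPeriod a b)
      (by rw [hlen, wm_length a b hm]) ?_
    rw [wm, append_assoc, take_left' (bigU_length a b hm), ← hprefix, take_take,
      min_eq_left (by omega)]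
  refine ⟨a, b, fun hab => ?_, hw⟩
  obtain ⟨x, -, -, -, hx, -, hxw, -⟩ := hfs 1 le_rfl hm
  rw [hw, hab, wm_self b hm] at hxw
  have := hxw.add_length_of_replicate
  omega
end

section
/- Let m ≥ 1 be odd and w_m = (a^{m-1} b a a^{m-1} b a^{m-1} b a)^2 a^{m-1}. Then the total number of distinct squares occurring in w_m equals (9m + 1)/2. -/
/-!
Record `wm a b m` by the set `B = {m-1, 2m, 3m, 4m+1, 5m+2, 6m+2}` of positions of `b` in a
word of length `7m+3`. A square of half-length `L` starting at `s` is exactly a window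
`[s, s+2L)` on which membership in `B` is `L`-periodic. A window without `b` lies in a run of at
most `m` letters `a`, giving the squares `a^{2L}` with `2L < m` (`m` is odd). Otherwise some
`b` at `q` is matched by a `b` at `q + L`, so `L` is a difference of elements of `B`, leaving
`L ∈ {m, m+1, 2m+1, 2m+2, 3m+2}`; for each such `L` the window must avoid the points where `B`
and `B - L` disagree, which confines `s` to explicit intervals. Up to the period `3m+2` of the
word these give `(m-1)/2 + m + (m+1) + m + m = (9m+1)/2` distinct squares.
-/

variable {α : Type*}

section IndicatorWord

variable (a b : α) (p : ℕ → Prop) [DecidablePred p]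

def indicatorWord (s L : ℕ) : List α :=
  (List.range L).map fun i => if p (s + i) then b else a

@[simp]
lemma length_indicatorWord (s L : ℕ) : (indicatorWord a b p s L).length = L := by
  simp [indicatorWord]

@[simp]
lemma getElem_indicatorWord (s L i : ℕ) (hi : i < (indicatorWord a b p s L).length) :
    (indicatorWord a b p s L)[i] = if p (s + i) then b else a := by
  simp [indicatorWord]

lemma indicatorWord_add (s L₁ L₂ : ℕ) :
    indicatorWord a b p s (L₁ + L₂) =
      indicatorWord a b p s L₁ ++ indicatorWord a b p (s + L₁) L₂ := by
  simp only [indicatorWord, List.range_add, List.map_append, List.map_map]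
  congr 2
  ext i
  simp [Nat.add_assoc]

lemma indicatorWord_congr {s t L : ℕ} (h : ∀ i < L, (p (s + i) ↔ p (t + i))) :
    indicatorWord a b p s L = indicatorWord a b p t L :=
  List.ext_getElem (by simp) fun i hi _ => by
    simp only [getElem_indicatorWord, h i (by simpa using hi)]

lemma indicatorWord_eq_replicate {s L : ℕ} (h : ∀ i < L, ¬ p (s + i)) :
    indicatorWord a b p s L = List.replicate L a :=
  List.eq_replicate_iff.2 ⟨by simp, by
    simp only [indicatorWord, List.mem_map, List.mem_range]
    rintro _ ⟨i, hi, rfl⟩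
    simp [h i hi]⟩

lemma indicatorWord_one {s : ℕ} (h : p s) : indicatorWord a b p s 1 = [b] := by
  simp [indicatorWord, h]

lemma indicatorWord_two {s : ℕ} (h₀ : p s) (h₁ : ¬ p (s + 1)) :
    indicatorWord a b p s 2 = [b, a] := by
  simp [indicatorWord, List.range_succ, h₀, h₁]

variable {a b p}

lemma indicatorWord_eq_indicatorWord_iff (hab : a ≠ b) {s t L : ℕ} :
    indicatorWord a b p s L = indicatorWord a b p t L ↔ ∀ i < L, (p (s + i) ↔ p (t + i)) := by
  refine ⟨fun h i hi => ?_, indicatorWord_congr a b p⟩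
  have := congrArg (·[i]?) h
  by_cases hs : p (s + i) <;> by_cases ht : p (t + i) <;>
    simp_all [indicatorWord, hab.symm]

lemma isInfix_indicatorWord_iff {x : List α} {n : ℕ} :
    x <:+: indicatorWord a b p 0 n ↔
      ∃ s, s + x.length ≤ n ∧ x = indicatorWord a b p s x.length := by
  constructor
  · rintro ⟨t, y, h⟩
    obtain rfl : t.length + x.length + y.length = n := by
      simpa [Nat.add_assoc] using congrArg List.length h
    rw [indicatorWord_add, indicatorWord_add, zero_add] at h
    exact ⟨t.length, by omega,
      List.append_inj_right (List.append_inj_left' h (by simp)) (by simp)⟩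
  · rintro ⟨s, hs, hx⟩
    obtain ⟨k, rfl⟩ := Nat.exists_eq_add_of_le hs
    refine ⟨indicatorWord a b p 0 s, indicatorWord a b p (s + x.length) k, ?_⟩
    rw [indicatorWord_add, indicatorWord_add, zero_add, zero_add, ← hx]

end IndicatorWord

def HasSquareAt (p : ℕ → Prop) (s L : ℕ) : Prop :=
  ∀ i < L, (p (s + i) ↔ p (s + L + i))

section Squares

variable {p : ℕ → Prop}

lemma HasSquareAt.iff {s L : ℕ} (h : HasSquareAt p s L) {j : ℕ} (h₁ : s ≤ j) (h₂ : j < s + L) :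
    p j ↔ p (j + L) := by
  simpa [show s + (j - s) = j by omega, show s + L + (j - s) = j + L by omega] using
    h (j - s) (by omega)

lemma HasSquareAt.exists_pair {s L j : ℕ} (h : HasSquareAt p s L) (hj : p j) (h₁ : s ≤ j)
    (h₂ : j < s + 2 * L) : ∃ q, s ≤ q ∧ q < s + L ∧ p q ∧ p (q + L) := by
  rcases lt_or_ge j (s + L) with hjL | hjL
  · exact ⟨j, h₁, hjL, hj, (h.iff h₁ hjL).1 hj⟩
  · refine ⟨j - L, by omega, by omega, ?_, by rwa [Nat.sub_add_cancel (by omega)]⟩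
    have := h.iff (j := j - L) (by omega) (by omega)
    rw [Nat.sub_add_cancel (by omega)] at this
    exact this.2 hj

lemma HasSquareAt.lt_or_add_le {s L j : ℕ} (h : HasSquareAt p s L) (hj : ¬ (p j ↔ p (j + L))) :
    j < s ∨ s + L ≤ j := by
  by_contra! hmem
  exact hj (h.iff hmem.1 hmem.2)

variable [DecidablePred p] {a b : α}

lemma mem_squareSet_indicatorWord_iff (hab : a ≠ b) {n : ℕ} {x : List α} :
    x ∈ squareSet (indicatorWord a b p 0 n) ↔
      ∃ s L, 0 < L ∧ s + 2 * L ≤ n ∧ HasSquareAt p s L ∧ x = indicatorWord a b p s (2 * L) := by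
  constructor
  · rintro ⟨u, hu, rfl, hinf⟩
    obtain ⟨s, hs, hx⟩ := isInfix_indicatorWord_iff.1 hinf
    rw [List.length_append, indicatorWord_add] at hx
    obtain ⟨h₁, h₂⟩ := List.append_inj hx (by simp)
    refine ⟨s, u.length, List.length_pos_iff.2 hu, by simpa [two_mul] using hs, ?_, ?_⟩
    · exact (indicatorWord_eq_indicatorWord_iff hab).1 (h₁.symm.trans h₂)
    · rw [two_mul, indicatorWord_add, ← h₁, ← h₂]
  · rintro ⟨s, L, hL, hn, hsq, rfl⟩
    refine ⟨indicatorWord a b p s L, by simpa [← List.length_pos_iff] using hL, ?_,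
      isInfix_indicatorWord_iff.2 ⟨s, by simpa, by simp⟩⟩
    rw [two_mul, indicatorWord_add, indicatorWord_congr a b p (fun i hi => (hsq i hi).symm)]

end Squares

-- 0-indexed positions of the letter `b` in `wm a b m`.
def IsBPos (m i : ℕ) : Prop :=
  i = m - 1 ∨ i = 2 * m ∨ i = 3 * m ∨ i = 4 * m + 1 ∨ i = 5 * m + 2 ∨ i = 6 * m + 2

instance (m : ℕ) : DecidablePred (IsBPos m) := fun _ => by unfold IsBPos; infer_instance

section Wm

variable {m : ℕ}

lemma bigU_eq_indicatorWord (a b : α) (hm : 0 < m) {t : ℕ} (ht : t = 0 ∨ t = 3 * m + 2) :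
    bigU a b m = indicatorWord a b (IsBPos m) t (3 * m + 2) := by
  rw [show 3 * m + 2 = (m - 1) + (2 + ((m - 1) + (1 + ((m - 1) + 2)))) by omega]
  simp only [indicatorWord_add]
  rw [indicatorWord_eq_replicate _ _ _ (by intro i hi; unfold IsBPos; omega),
    indicatorWord_two _ _ _ (by unfold IsBPos; omega) (by unfold IsBPos; omega),
    indicatorWord_eq_replicate _ _ _ (by intro i hi; unfold IsBPos; omega),
    indicatorWord_one _ _ _ (by unfold IsBPos; omega),
    indicatorWord_eq_replicate _ _ _ (by intro i hi; unfold IsBPos; omega),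
    indicatorWord_two _ _ _ (by unfold IsBPos; omega) (by unfold IsBPos; omega)]
  simp [bigU]

lemma wm_eq_indicatorWord (a b : α) (hm : 0 < m) :
    wm a b m = indicatorWord a b (IsBPos m) 0 (7 * m + 3) := by
  rw [show 7 * m + 3 = (3 * m + 2) + ((3 * m + 2) + (m - 1)) by omega,
    indicatorWord_add _ _ _ 0 (3 * m + 2), indicatorWord_add _ _ _ _ (3 * m + 2) (m - 1),
    ← bigU_eq_indicatorWord a b hm (.inl rfl), ← bigU_eq_indicatorWord a b hm (.inr (by omega)),
    indicatorWord_eq_replicate _ _ _ (by intro i hi; unfold IsBPos; omega)]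
  simp [wm]

lemma exists_isBPos_of_lt {s ℓ : ℕ} (hℓ : m < ℓ) (hn : s + ℓ ≤ 7 * m + 3) :
    ∃ j, IsBPos m j ∧ s ≤ j ∧ j < s + ℓ := by
  by_contra! h
  have h₁ := h (m - 1) (by simp [IsBPos])
  have h₂ := h (2 * m) (by simp [IsBPos])
  have h₃ := h (3 * m) (by simp [IsBPos])
  have h₄ := h (4 * m + 1) (by simp [IsBPos])
  have h₅ := h (5 * m + 2) (by simp [IsBPos])
  have h₆ := h (6 * m + 2) (by simp [IsBPos])
  omega

variable {s L : ℕ}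

lemma HasSquareAt.not_isBPos (h : HasSquareAt (IsBPos m) s L) (hL : 0 < L) (hsmall : 2 * L ≤ m) :
    ∀ i < 2 * L, ¬ IsBPos m (s + i) := by
  intro i hi hb
  obtain ⟨q, -, -, hq, hqL⟩ := h.exists_pair hb (by omega) (by omega)
  simp only [IsBPos] at hq hqL
  omega

lemma HasSquareAt.halfLength_cases (h : HasSquareAt (IsBPos m) s L) (hn : s + 2 * L ≤ 7 * m + 3)
    (hlarge : m < 2 * L) :
    L = m ∨ L = m + 1 ∨ L = 2 * m + 1 ∨ L = 2 * m + 2 ∨ L = 3 * m + 2 := by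
  obtain ⟨j, hj, hsj, hjs⟩ := exists_isBPos_of_lt hlarge hn
  obtain ⟨q, -, -, hq, hqL⟩ := h.exists_pair hj hsj hjs
  simp only [IsBPos] at hqL
  rcases hq with rfl | rfl | rfl | rfl | rfl | rfl <;> omega

lemma HasSquareAt.isBPos_cases (hm : 0 < m) (h : HasSquareAt (IsBPos m) s L)
    (hn : s + 2 * L ≤ 7 * m + 3) (hlarge : m < 2 * L) :
    (L = m ∧ (m < s ∧ s ≤ 2 * m ∨ 4 * m + 2 < s ∧ s ≤ 5 * m + 2)) ∨
    (L = m + 1 ∧ (s + 2 ≤ m ∨ 2 * m < s ∧ s ≤ 4 * m)) ∨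
    (L = 2 * m + 1 ∧ s < m) ∨ (L = 3 * m + 2 ∧ s < m) := by
  -- the window `[s, s + L)` must avoid every `j` at which `IsBPos m j` and `IsBPos m (j + L)` differ
  have avoid := fun j (hj : ¬ (IsBPos m j ↔ IsBPos m (j + L))) => h.lt_or_add_le hj
  rcases h.halfLength_cases hn hlarge with hL | hL | hL | hL | hL <;> subst L
  · have h₁ := avoid (m - 1) (by unfold IsBPos; omega)
    have h₂ := avoid m (by unfold IsBPos; omega)
    have h₃ := avoid (3 * m) (by unfold IsBPos; omega)
    have h₄ := avoid (3 * m + 1) (by unfold IsBPos; omega)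
    have h₅ := avoid (4 * m + 1) (by unfold IsBPos; omega)
    have h₆ := avoid (4 * m + 2) (by unfold IsBPos; omega)
    have h₇ := avoid (6 * m + 2) (by unfold IsBPos; omega)
    omega
  · have h₁ := avoid (2 * m - 1) (by unfold IsBPos; omega)
    have h₂ := avoid (2 * m) (by unfold IsBPos; omega)
    have h₃ := avoid (5 * m + 1) (by unfold IsBPos; omega)
    omega
  · have h₁ := avoid (3 * m) (by unfold IsBPos; omega)
    have h₂ := avoid (3 * m + 1) (by unfold IsBPos; omega)
    omega
  · have h₁ := avoid (2 * m) (by unfold IsBPos; omega)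
    have h₂ := avoid (4 * m + 1) (by unfold IsBPos; omega)
    omega
  · omega

end Wm

open Finset

-- `(s, L)` stands for the square of half-length `L` starting at position `s` of `wm a b m`;
-- these are representatives of the distinct squares, one each.
def canonicalSquares (m : ℕ) : Finset (ℕ × ℕ) :=
  {m} ×ˢ Icc 1 ((m - 1) / 2) ∪ Icc (m + 1) (2 * m) ×ˢ {m} ∪ Icc (3 * m) (4 * m) ×ˢ {m + 1} ∪
    range m ×ˢ {2 * m + 1} ∪ range m ×ˢ {3 * m + 2}

section Canonical

variable {m : ℕ}

lemma mem_canonicalSquares {s L : ℕ} :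
    (s, L) ∈ canonicalSquares m ↔
      (s = m ∧ 0 < L ∧ 2 * L < m) ∨ (m < s ∧ s ≤ 2 * m ∧ L = m) ∨
      (3 * m ≤ s ∧ s ≤ 4 * m ∧ L = m + 1) ∨ (s < m ∧ L = 2 * m + 1) ∨ (s < m ∧ L = 3 * m + 2) := by
  simp only [canonicalSquares, mem_union, mem_product, mem_singleton, mem_Icc, mem_range]
  omega

lemma card_canonicalSquares (hm : Odd m) : #(canonicalSquares m) = (9 * m + 1) / 2 := by
  obtain ⟨k, hk⟩ := hm
  rw [canonicalSquares, card_union_of_disjoint, card_union_of_disjoint, card_union_of_disjoint,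
    card_union_of_disjoint]
  · simp
    omega
  all_goals
    refine disjoint_left.2 fun ⟨s, L⟩ hx hy => ?_
    simp only [mem_union, mem_product, mem_singleton, mem_Icc, mem_range] at hx hy
    omega

lemma HasSquareAt.exists_mem_canonicalSquares (hm : Odd m) {s L : ℕ}
    (h : HasSquareAt (IsBPos m) s L) (hL : 0 < L) (hn : s + 2 * L ≤ 7 * m + 3) :
    ∃ t, (t, L) ∈ canonicalSquares m ∧ ∀ i < 2 * L, (IsBPos m (s + i) ↔ IsBPos m (t + i)) := by
  rcases le_or_gt (2 * L) m with hsmall | hlarge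
  · have hlt : 2 * L < m := by obtain ⟨k, rfl⟩ := hm; omega
    refine ⟨m, mem_canonicalSquares.2 (.inl ⟨rfl, hL, hlt⟩), fun i hi => ?_⟩
    have := h.not_isBPos hL hsmall i hi
    unfold IsBPos at this ⊢
    omega
  obtain ⟨hL, hs⟩ | ⟨hL, hs⟩ | ⟨hL, hs⟩ | ⟨hL, hs⟩ := h.isBPos_cases hm.pos hn hlarge <;> subst L
  -- shift by the period `3 * m + 2` of `wm`, or by the period `m + 1` of the square
  · refine ⟨if s ≤ 2 * m then s else s - (3 * m + 2), ?_, ?_⟩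
    · rw [mem_canonicalSquares]; split_ifs <;> omega
    · intro i hi; unfold IsBPos; split_ifs <;> omega
  · refine ⟨if s < m then s + (3 * m + 2) else if s < 3 * m then s + (m + 1) else s, ?_, ?_⟩
    · rw [mem_canonicalSquares]; split_ifs <;> omega
    · intro i hi; unfold IsBPos; split_ifs <;> omega
  · exact ⟨s, mem_canonicalSquares.2 (by omega), fun _ _ => Iff.rfl⟩
  · exact ⟨s, mem_canonicalSquares.2 (by omega), fun _ _ => Iff.rfl⟩

lemma eq_of_mem_canonicalSquares {s t L : ℕ} (hs : (s, L) ∈ canonicalSquares m)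
    (ht : (t, L) ∈ canonicalSquares m) (h : ∀ i < 2 * L, (IsBPos m (s + i) ↔ IsBPos m (t + i))) :
    s = t := by
  rw [mem_canonicalSquares] at hs ht
  -- the `b` at position `2 * m` (resp. `4 * m + 1`) of the first window must reappear in the second
  have h₁ : 2 * m < s + 2 * L → s ≤ 2 * m → IsBPos m (t + (2 * m - s)) := fun hi hsi =>
    (h (2 * m - s) (by omega)).1 (by unfold IsBPos; omega)
  have h₂ : 4 * m + 1 < s + 2 * L → s ≤ 4 * m + 1 → IsBPos m (t + (4 * m + 1 - s)) := fun hi hsi =>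
    (h (4 * m + 1 - s) (by omega)).1 (by unfold IsBPos; omega)
  unfold IsBPos at h₁ h₂
  rcases hs with ⟨rfl, hL⟩ | ⟨hs₁, hs₂, rfl⟩ | ⟨hs₁, hs₂, rfl⟩ | ⟨hs, rfl⟩ | ⟨hs, rfl⟩ <;> omega

variable {a b : α}

lemma injOn_canonicalSquares (hab : a ≠ b) :
    Set.InjOn (fun x : ℕ × ℕ => indicatorWord a b (IsBPos m) x.1 (2 * x.2)) (canonicalSquares m) := by
  rintro ⟨s, L⟩ hs ⟨t, L'⟩ ht h
  obtain rfl : L = L' := by simpa using congrArg List.length h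
  exact Prod.ext (eq_of_mem_canonicalSquares hs ht
    ((indicatorWord_eq_indicatorWord_iff hab).1 h)) rfl

lemma squareSet_wm (hab : a ≠ b) (hm : Odd m) :
    squareSet (wm a b m) =
      (fun x : ℕ × ℕ => indicatorWord a b (IsBPos m) x.1 (2 * x.2)) '' canonicalSquares m := by
  ext x
  rw [wm_eq_indicatorWord a b hm.pos, mem_squareSet_indicatorWord_iff hab]
  simp only [Set.mem_image, mem_coe, Prod.exists]
  constructor
  · rintro ⟨s, L, hL, hn, h, rfl⟩
    obtain ⟨t, ht, hst⟩ := h.exists_mem_canonicalSquares hm hL hn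
    exact ⟨t, L, ht, (indicatorWord_congr a b _ hst).symm⟩
  · rintro ⟨s, L, hmem, rfl⟩
    refine ⟨s, L, ?_⟩
    rw [mem_canonicalSquares] at hmem
    refine ⟨by omega, by omega, fun i hi => ?_, rfl⟩
    unfold IsBPos
    omega

end Canonical

theorem stmt10_general {α : Type*} (a b : α) (hab : a ≠ b) (m : ℕ) (hmo : Odd m) :
    (squareSet (wm a b m)).ncard = (9 * m + 1) / 2 := by
  rw [squareSet_wm hab hmo, (injOn_canonicalSquares hab).ncard_image,
    Set.ncard_coe_finset, card_canonicalSquares hmo]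

/-- For odd m ≥ 1, wₘ contains exactly (9m+1)/2 distinct squares. -/
theorem stmt10 {α : Type*} (a b : α) (hab : a ≠ b) (m : ℕ) (hm : 1 ≤ m) (hmo : Odd m) :
    (squareSet (wm a b m)).ncard = (9 * m + 1) / 2 :=
  stmt10_general a b hab m hmo
end

section
/- For every real ε > 0 there exists a word w (over a two-letter alphabet) such that the number of distinct squares occurring in w is greater than (5/6 − ε)·|w|. -/
variable {α : Type*}

/-!
Write `a = 0`, `b = 1` and `block t = a^t b a^(t+1) b a^t b a^(t+1) b a^(t+1) b a^t b`, the paper's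
`X_(t+1)`, of length `6t + 9`. Whenever `p + q = t`, the two consecutive blocks
`block t ++ block (t+1)` contain the squares of five different words: those whose runs of `a`s,
separated by single `b`s, have lengths `[p+1, q]`, `[p, t+1, q]`, `[p, t+1, q+2]`,
`[p, t, t+1, q+1]` and `[p, t+1, t, q+1]`. Hence `block 0 ⋯ block n` has length
`3(n+1)^2 + 6(n+1)` and contains at least `5n(n+1)/2` distinct squares, a ratio tending to `5/6`.
-/

lemma squareSet_finite (w : List α) : (squareSet w).Finite :=
  (List.finite_toSet w.sublists).subset fun _ ⟨_, _, _, hx⟩ ↦ List.mem_sublists.2 hx.sublist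

lemma List.append_self_injective : Function.Injective fun u : List α ↦ u ++ u := by
  intro u v h
  have hlen : u.length = v.length := by
    have := congrArg List.length h
    simp only [List.length_append] at this
    omega
  exact (List.append_inj h hlen).1

namespace SquareDensity

def zeros (n : ℕ) : List (Fin 2) := List.replicate n 0

lemma zeros_append_zeros_append (m n : ℕ) (l : List (Fin 2)) :
    zeros m ++ (zeros n ++ l) = zeros (m + n) ++ l := by
  rw [← List.append_assoc, zeros, zeros, zeros, List.replicate_append_replicate]

def runWord (ns : List ℕ) : List (Fin 2) := [1].intercalate (ns.map zeros)

lemma runWord_injOn {ns ms : List ℕ} (hns : ns ≠ []) (hms : ms ≠ [])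
    (h : runWord ns = runWord ms) : ns = ms := by
  have no_one : ∀ ks : List ℕ, ∀ l ∈ ks.map zeros, (1 : Fin 2) ∉ l := by
    simp [zeros, List.mem_replicate]
  have := congrArg (List.splitOn 1) h
  rw [runWord, runWord, List.splitOn_intercalate _ (no_one ns) (by simpa using hns),
    List.splitOn_intercalate _ (no_one ms) (by simpa using hms)] at this
  exact List.map_injective_iff.2 (List.replicate_left_injective 0) this

def runs : Fin 5 → ℕ → ℕ → List ℕ
  | 0, p, q => [p + 1, q]
  | 1, p, q => [p, p + q + 1, q]
  | 2, p, q => [p, p + q + 1, q + 2]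
  | 3, p, q => [p, p + q, p + q + 1, q + 1]
  | 4, p, q => [p, p + q + 1, p + q, q + 1]

lemma runs_ne_nil (k : Fin 5) (p q : ℕ) : runs k p q ≠ [] := by
  fin_cases k <;> simp [runs]

lemma runs_inj {k k' : Fin 5} {p q p' q' : ℕ} (h : runs k p q = runs k' p' q') :
    k = k' ∧ p = p' ∧ q = q' := by
  fin_cases k <;> fin_cases k' <;> simp [runs] at h ⊢ <;> omega

def root (k : Fin 5) (p q : ℕ) : List (Fin 2) := runWord (runs k p q)

lemma root_ne_nil (k : Fin 5) (p q : ℕ) : root k p q ≠ [] := by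
  fin_cases k <;> simp [root, runs, runWord, List.intercalate_cons_cons]

lemma root_inj {k k' : Fin 5} {p q p' q' : ℕ} (h : root k p q = root k' p' q') :
    k = k' ∧ p = p' ∧ q = q' :=
  runs_inj (runWord_injOn (runs_ne_nil k p q) (runs_ne_nil k' p' q') h)

def block (t : ℕ) : List (Fin 2) := runWord [t, t + 1, t, t + 1, t + 1, t] ++ [1]

lemma length_block (t : ℕ) : (block t).length = 6 * t + 9 := by
  simp [block, runWord, zeros, List.intercalate_cons_cons]
  omega

lemma root_append_root_infix (k : Fin 5) {p q t : ℕ} (ht : p + q = t) :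
    root k p q ++ root k p q <:+: block t ++ block (t + 1) := by
  fin_cases k <;>
  [refine ⟨zeros t ++ 1 :: zeros (t + 1) ++ 1 :: zeros t ++ 1 :: zeros q,
      zeros p ++ 1 :: block (t + 1), ?_⟩;
    refine ⟨zeros q, zeros (p + 1) ++ 1 :: zeros t ++ 1 :: block (t + 1), ?_⟩;
    refine ⟨zeros t ++ 1 :: zeros (t + 1) ++ 1 :: zeros t ++ 1 :: zeros (t + 1) ++ 1 ::
        zeros (t + 1) ++ 1 :: zeros q,
      zeros p ++ 1 :: zeros (t + 2) ++ 1 :: zeros (t + 1) ++ [1], ?_⟩;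
    refine ⟨zeros t ++ 1 :: zeros (q + 1),
      zeros (p + 1) ++ 1 :: zeros (t + 1) ++ 1 :: zeros (t + 2) ++ 1 :: zeros (t + 2) ++ 1 ::
        zeros (t + 1) ++ [1], ?_⟩;
    refine ⟨zeros q,
      zeros p ++ 1 :: zeros (t + 2) ++ 1 :: zeros (t + 1) ++ 1 :: zeros (t + 2) ++ 1 ::
        zeros (t + 2) ++ 1 :: zeros (t + 1) ++ [1], ?_⟩] <;>
  · simp only [root, runs, runWord, block, ← ht, List.map_cons, List.map_nil,
      List.intercalate_cons_cons, List.intercalate_singleton, List.append_assoc,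
      List.cons_append, List.nil_append, zeros_append_zeros_append]
    ring_nf

def word (n : ℕ) : List (Fin 2) := (List.range n).flatMap block

lemma word_succ (n : ℕ) : word (n + 1) = word n ++ block n := by
  simp [word, List.range_succ]

lemma word_prefix_of_le {m n : ℕ} (h : m ≤ n) : word m <+: word n := by
  induction n, h using Nat.le_induction with
  | base => exact List.prefix_refl _
  | succ n _ ih => exact ih.trans (word_succ n ▸ List.prefix_append _ _)

lemma length_word (n : ℕ) : (word n).length = 3 * n ^ 2 + 6 * n := by
  induction n with
  | zero => rfl
  | succ n ih => rw [word_succ, List.length_append, ih, length_block]; ring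

lemma block_append_block_infix_word {t n : ℕ} (h : t + 2 ≤ n) :
    block t ++ block (t + 1) <:+: word n := by
  have : word (t + 2) = word t ++ (block t ++ block (t + 1)) := by
    rw [word_succ, word_succ, List.append_assoc]
  exact (this ▸ List.suffix_append _ _).isInfix.trans (word_prefix_of_le h).isInfix

lemma root_append_root_mem_squareSet_word (k : Fin 5) {p q n : ℕ} (h : p + q + 2 ≤ n) :
    root k p q ++ root k p q ∈ squareSet (word n) :=
  ⟨root k p q, root_ne_nil k p q, rfl,
    (root_append_root_infix k rfl).trans (block_append_block_infix_word h)⟩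

open Finset

def squareIndex (n : ℕ) : Finset (Fin 5 × (_ : ℕ) × ℕ × ℕ) :=
  univ ×ˢ (range n).sigma antidiagonal

lemma two_mul_card_squareIndex (n : ℕ) : 2 * #(squareIndex n) = 5 * (n * (n + 1)) := by
  have gauss : (∑ t ∈ range n, (t + 1)) * 2 = (n + 1) * n := by
    simpa [sum_range_succ'] using sum_range_id_mul_two (n + 1)
  simp only [squareIndex, card_product, card_univ, Fintype.card_fin, card_sigma,
    Nat.card_antidiagonal]
  linarith

lemma mem_squareIndex {n : ℕ} {k : Fin 5} {t p q : ℕ} :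
    (k, ⟨t, (p, q)⟩) ∈ squareIndex n ↔ t < n ∧ p + q = t := by
  simp [squareIndex]

lemma card_squareIndex_le_ncard_squareSet_word (n : ℕ) :
    #(squareIndex n) ≤ (squareSet (word (n + 1))).ncard := by
  rw [← Set.ncard_coe_finset]
  refine Set.ncard_le_ncard_of_injOn (fun x ↦ root x.1 x.2.2.1 x.2.2.2 ++ root x.1 x.2.2.1 x.2.2.2)
    ?_ ?_ (squareSet_finite _)
  · rintro ⟨k, t, p, q⟩ hx
    obtain ⟨ht, rfl⟩ := mem_squareIndex.1 hx
    dsimp only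
    exact root_append_root_mem_squareSet_word k (by omega)
  · rintro ⟨k, t, p, q⟩ hx ⟨k', t', p', q'⟩ hx' h
    obtain ⟨-, rfl⟩ := mem_squareIndex.1 hx
    obtain ⟨-, rfl⟩ := mem_squareIndex.1 hx'
    obtain ⟨rfl, rfl, rfl⟩ := root_inj (List.append_self_injective h)
    rfl

end SquareDensity

open SquareDensity in
/-- There exist words whose distinct-square-density approaches 5/6. -/
theorem stmt14 : ∀ ε : ℝ, 0 < ε → ∃ w : List (Fin 2),
    ((squareSet w).ncard : ℝ) > (5 / 6 - ε) * w.length := by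
  intro ε hε
  obtain ⟨n, hn⟩ := exists_nat_gt (3 / ε)
  refine ⟨word (n + 1), ?_⟩
  have hcount : (5 * (n * (n + 1)) : ℝ) ≤ 2 * (squareSet (word (n + 1))).ncard := by
    exact_mod_cast (two_mul_card_squareIndex n).symm.le.trans
      (Nat.mul_le_mul_left 2 (card_squareIndex_le_ncard_squareSet_word n))
  have hεn : 3 < ε * n := by rwa [div_lt_iff₀ hε, mul_comm] at hn
  rw [length_word]
  push_cast
  nlinarith
end

section
/- Let i be an FS-double-square-position of word w with FS-double-square (u, U), i.e., two squares u^2 and U^2 with |u| < |U| both having their last occurrence beginning at position i. If w^2 is a square whose last occurrence in the word begins at position i+1, with root x, then |x| ∈ {|u|, |U|} or |x| ≥ 2|u|. -/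
variable {α : Type*}

/-!
Read `w` from the common starting point of `u²` and `U²` as a sequence `f`. Writing
`p = |u|`, `q = |U|`, `m = |x|`, the three squares say that `f` has period `p` on `[0, 2p)`,
period `q` on `[0, 2q)` and period `m` on `[1, 2m + 1)`. If `2p ≤ q` then `u²` recurs `q`
positions later, and if `2m < q` so does `x²`. Otherwise the differences of these periods are
again local periods, and two applications of the Fine–Wilf theorem give the block `[p, p + q)`
a period `g` dividing both `p` and `|q - m|`. Then `f` has period `|q - m|` long enough for
`x²` (when `m < q`) or `u²` (when `q < m`) to recur `|q - m|` positions later, contradicting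
that the occurrences at `i` and `i + 1` are the last ones.
-/

def HasPeriodOn {β : Type*} (f : ℕ → β) (p A B : ℕ) : Prop :=
  ∀ i, A ≤ i → i + p < B → f i = f (i + p)

theorem Nat.exists_modEq_mem_Ico (A : ℕ) {E : ℕ} (hE : 0 < E) (i : ℕ) :
    ∃ r, A ≤ r ∧ r < A + E ∧ r ≡ i [MOD E] := by
  refine ⟨A + (i + E * A - A) % E, by omega,
    by have := Nat.mod_lt (i + E * A - A) hE; omega, ?_⟩
  calc A + (i + E * A - A) % E ≡ A + (i + E * A - A) [MOD E] :=
        Nat.ModEq.add_left A (Nat.mod_modEq _ _)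
    _ = i + E * A := by have := Nat.le_mul_of_pos_left A hE; omega
    _ ≡ i [MOD E] := Nat.add_mul_mod_self_left i E A

namespace HasPeriodOn

variable {β : Type*} {f : ℕ → β} {p q g A B A' B' : ℕ}

theorem mono (h : HasPeriodOn f p A B) (hA : A ≤ A') (hB : B' ≤ B) : HasPeriodOn f p A' B' :=
  fun i hi hiB => h i (hA.trans hi) (hiB.trans_le hB)

theorem union (h : HasPeriodOn f p A B) (h' : HasPeriodOn f p A' B') (hA' : A' + p ≤ B) :
    HasPeriodOn f p A B' := by
  intro i hi hiB
  rcases lt_or_ge (i + p) B with hiB' | hiB'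
  · exact h i hi hiB'
  · exact h' i (by omega) hiB

theorem eq_add_mul (h : HasPeriodOn f p A B) (k : ℕ) {i : ℕ} (hi : A ≤ i)
    (hik : i + p * k < B) : f i = f (i + p * k) := by
  induction k generalizing i with
  | zero => rfl
  | succ k ih =>
    rw [Nat.mul_succ] at hik
    calc f i = f (i + p) := h i hi (by omega)
      _ = f (i + p + p * k) := ih (by omega) (by omega)
      _ = f (i + p * (k + 1)) := by rw [Nat.mul_succ, Nat.add_right_comm, Nat.add_assoc]

theorem eq_of_modEq (h : HasPeriodOn f p A B) {i j : ℕ} (hi : A ≤ i) (hj : A ≤ j)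
    (hiB : i < B) (hjB : j < B) (hij : i ≡ j [MOD p]) : f i = f j := by
  wlog hle : i ≤ j generalizing i j
  · exact (this hj hi hjB hiB hij.symm (by omega)).symm
  obtain ⟨k, hk⟩ := (Nat.modEq_iff_dvd' hle).1 hij
  obtain rfl : j = i + p * k := by omega
  exact h.eq_add_mul k hi hjB

theorem of_dvd (h : HasPeriodOn f p A B) (hpq : p ∣ q) : HasPeriodOn f q A B :=
  fun i hi hiB => h.eq_of_modEq hi (by omega) (by omega) hiB
    (Nat.ModEq.add_left i (Nat.modEq_zero_iff_dvd.2 hpq)).symm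

theorem sub_of_common_start (hp : HasPeriodOn f p A B) (hq : HasPeriodOn f q A' B')
    (hpq : p ≤ q) : HasPeriodOn f (q - p) (max A A' + p) (min (B + (q - p)) B') := by
  intro i hi hiB
  calc f i = f (i - p + p) := by rw [Nat.sub_add_cancel (by omega)]
    _ = f (i - p) := (hp (i - p) (by omega) (by omega)).symm
    _ = f (i - p + q) := hq (i - p) (by omega) (by omega)
    _ = f (i + (q - p)) := by congr 1; omega

theorem sub_of_common_end (hp : HasPeriodOn f p A B) (hq : HasPeriodOn f q A' B')
    (hpq : p ≤ q) : HasPeriodOn f (q - p) (max A' (A + p - q)) (min B B' - p) := by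
  intro i hi hiB
  calc f i = f (i + q) := hq i (by omega) (by omega)
    _ = f (i + (q - p) + p) := by congr 1; omega
    _ = f (i + (q - p)) := (hp _ (by omega) (by omega)).symm

theorem translate (h : HasPeriodOn f p A B) (ht : HasPeriodOn f q A (B + q)) :
    HasPeriodOn f p (A + q) (B + q) := by
  intro i hi hiB
  calc f i = f (i - q + q) := by rw [Nat.sub_add_cancel (by omega)]
    _ = f (i - q) := (ht (i - q) (by omega) (by omega)).symm
    _ = f (i - q + p) := h (i - q) (by omega) (by omega)
    _ = f (i - q + p + q) := ht _ (by omega) (by omega)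
    _ = f (i + p) := by congr 1; omega

theorem extend (hE : HasPeriodOn f E A B) (hg : HasPeriodOn f g A' B') (hgE : g ∣ E)
    (hE0 : 0 < E) (hA : A ≤ A') (hA'B' : A' + E ≤ B') (hB : B' ≤ B) :
    HasPeriodOn f g A B := by
  intro i hi hiB
  obtain ⟨r, hr, hrE, hri⟩ := Nat.exists_modEq_mem_Ico A' hE0 i
  obtain ⟨r', hr', hr'E, hr'i⟩ := Nat.exists_modEq_mem_Ico A' hE0 (i + g)
  have hrr' : r ≡ r' [MOD g] :=
    calc r ≡ i [MOD g] := hri.of_dvd hgE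
      _ ≡ i + g [MOD g] := (Nat.add_modEq_right).symm
      _ ≡ r' [MOD g] := (hr'i.of_dvd hgE).symm
  calc f i = f r := hE.eq_of_modEq hi (by omega) (by omega) (by omega) hri.symm
    _ = f r' := hg.eq_of_modEq hr hr' (by omega) (by omega) hrr'
    _ = f (i + g) := hE.eq_of_modEq (by omega) (by omega) (by omega) hiB hr'i

/-- Fine–Wilf theorem. -/
theorem gcd (hp : HasPeriodOn f p A B) (hq : HasPeriodOn f q A B)
    (h : A + p + q ≤ B + Nat.gcd p q) : HasPeriodOn f (Nat.gcd p q) A B := by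
  induction hn : p + q using Nat.strong_induction_on generalizing p q B with
  | _ n ih =>
  wlog hpq : p ≤ q generalizing p q
  · rw [Nat.gcd_comm] at h ⊢
    exact this hq hp (by omega) (by omega) (by omega)
  obtain rfl | hp0 := Nat.eq_zero_or_pos p
  · simpa using hq
  obtain rfl | hpq := hpq.eq_or_lt
  · simpa using hp
  have hg : Nat.gcd p q ≤ q - p :=
    Nat.le_of_dvd (by omega) (Nat.dvd_sub (Nat.gcd_dvd_right _ _) (Nat.gcd_dvd_left _ _))
  have hsub : HasPeriodOn f (q - p) A (B - p) :=
    (hp.sub_of_common_end hq hpq.le).mono (by omega) (by omega)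
  have hgcd := ih q (by omega) (hp.mono le_rfl (by omega)) hsub
    (by rw [Nat.gcd_sub_self_right hpq.le]; omega) (by omega)
  rw [Nat.gcd_sub_self_right hpq.le] at hgcd
  exact hp.extend hgcd (Nat.gcd_dvd_left _ _) hp0 le_rfl (by omega) (by omega)

theorem gcd_of_subinterval (hp : HasPeriodOn f p A B) (hq : HasPeriodOn f q A' B')
    (hp0 : 0 < p) (hq0 : 0 < q) (hA : A ≤ A') (hB : B' ≤ B)
    (h : A' + p + q ≤ B' + Nat.gcd p q) : HasPeriodOn f (Nat.gcd p q) A B :=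
  hp.extend ((hp.mono hA hB).gcd hq h) (Nat.gcd_dvd_left _ _) hp0 hA
    (by have := Nat.le_of_dvd hq0 (Nat.gcd_dvd_right p q); omega) hB

theorem extend_of_square (hg : HasPeriodOn f g p B) (hp : HasPeriodOn f p 0 (2 * p))
    (hgp : g ∣ p) (hp0 : 0 < p) (hB : 2 * p ≤ B) : HasPeriodOn f g 0 B :=
  (hp.extend (hg.mono le_rfl hB) hgp hp0 (Nat.zero_le p) (by omega) le_rfl).union hg
    (by have := Nat.le_of_dvd hp0 hgp; omega)

end HasPeriodOn

section ThreeSquares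

open HasPeriodOn

variable {β : Type*} {f : ℕ → β} {p q m : ℕ}

theorem shift_of_three_squares_of_lt (hu : HasPeriodOn f p 0 (2 * p))
    (hU : HasPeriodOn f q 0 (2 * q)) (hx : HasPeriodOn f m 1 (2 * m + 1))
    (hpq : p < q) (hq : q < 2 * p) (hqm : q ≤ 2 * m) (hmp : m ≠ p) (hmq : m < q) :
    HasPeriodOn f (q - m) 1 (2 * m + 1 + (q - m)) := by
  have hblock : HasPeriodOn f (q - p) p (p + q) :=
    (hu.sub_of_common_start hU hpq.le).mono (by omega) (by omega)
  have htail : HasPeriodOn f (q - m) (m + 1) (m + q + 1) :=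
    (hx.sub_of_common_start hU hmq.le).mono (by omega) (by omega)
  set G := Nat.gcd (q - p) (q - m)
  have hG0 : 0 < G := Nat.gcd_pos_of_pos_left _ (by omega)
  have hGe : G ∣ q - p := Nat.gcd_dvd_left _ _
  have hGd : G ∣ q - m := Nat.gcd_dvd_right _ _
  have hG : HasPeriodOn f G p (p + q) :=
    hblock.gcd_of_subinterval (htail.mono (le_max_right p (m + 1)) (min_le_right (p + q) _))
      (by omega) (by omega) (le_max_left _ _) (min_le_left _ _) (by omega)
  set g := Nat.gcd G m
  have hg0 : 0 < g := Nat.gcd_pos_of_pos_left _ hG0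
  have hg : HasPeriodOn f g p (p + q) := by
    rcases hmp.lt_or_gt with hmp | hmp
    · have hGle : G ≤ p - m := Nat.le_of_dvd (by omega) <| by
        simpa [show q - m - (q - p) = p - m by omega] using Nat.dvd_sub hGd hGe
      -- the `m`-period of `x²` on `[1, p)` is copied into `[p + 1, 2p)` by the square `u²`
      have hxu : HasPeriodOn f m (1 + p) (p + p) :=
        (hx.mono le_rfl (by omega) : HasPeriodOn f m 1 p).translate (hu.mono (by omega) (by omega))
      exact hG.gcd_of_subinterval hxu hG0 (by omega) (by omega) (by omega) (by omega)
    · have hGle : G ≤ m - p := Nat.le_of_dvd (by omega) <| by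
        simpa [show q - p - (q - m) = m - p by omega] using Nat.dvd_sub hGe hGd
      have hGle' : G ≤ q - m := Nat.le_of_dvd (by omega) hGd
      exact hG.gcd_of_subinterval (hx.mono (by omega) (min_le_left (2 * m + 1) (p + q))) hG0
        (by omega) le_rfl (min_le_right _ _) (by omega)
  have hgp : g ∣ p := by
    have hsum : g ∣ p + (q - p) := by
      rw [show p + (q - p) = m + (q - m) by omega]
      exact dvd_add (Nat.gcd_dvd_right _ _) ((Nat.gcd_dvd_left _ _).trans hGd)
    exact (Nat.dvd_add_left ((Nat.gcd_dvd_left _ _).trans hGe)).1 hsum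
  have hd : HasPeriodOn f (q - m) 0 (p + q) :=
    (hg.extend_of_square hu hgp (by omega) (by omega)).of_dvd ((Nat.gcd_dvd_left _ _).trans hGd)
  exact (hd.union htail (by omega)).mono (by omega) (by omega)

theorem shift_of_three_squares_of_gt (hu : HasPeriodOn f p 0 (2 * p))
    (hU : HasPeriodOn f q 0 (2 * q)) (hx : HasPeriodOn f m 1 (2 * m + 1))
    (hpq : p < q) (hq : q < 2 * p) (hqm : q < m) (hm : m < 2 * p) :
    HasPeriodOn f (m - q) 0 (2 * p + (m - q)) := by
  have hblock : HasPeriodOn f (q - p) p (p + q) :=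
    (hu.sub_of_common_start hU hpq.le).mono (by omega) (by omega)
  have htail : HasPeriodOn f (m - q) (q + 1) (q + m) :=
    (hU.sub_of_common_start hx hqm.le).mono (by omega) (by omega)
  set G := Nat.gcd (q - p) (m - q)
  have hG0 : 0 < G := Nat.gcd_pos_of_pos_left _ (by omega)
  have hGe : G ∣ q - p := Nat.gcd_dvd_left _ _
  have hGd : G ∣ m - q := Nat.gcd_dvd_right _ _
  have hG : HasPeriodOn f G p (p + q) :=
    hblock.gcd_of_subinterval (htail.mono le_rfl (by omega)) (by omega) (by omega) (by omega)
      le_rfl (by omega)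
  -- `u²` and `x²` give the period `m - p` on `[p + 1, p + m)`, and with `U²` then `p + q - m`
  have hS : HasPeriodOn f (p + q - m) p (min (2 * p) (p + 2 * q - m)) := by
    have := (hu.sub_of_common_start hx (by omega)).sub_of_common_end hU (by omega)
    rw [show q - (m - p) = p + q - m by omega] at this
    exact this.mono (by omega) (by omega)
  set g := Nat.gcd G (p + q - m)
  have hGle : G ≤ m - q := Nat.le_of_dvd (by omega) hGd
  have hGle' : G ≤ q - p := Nat.le_of_dvd (by omega) hGe
  have hg : HasPeriodOn f g p (p + q) :=
    hG.gcd_of_subinterval hS hG0 (by omega) le_rfl (by omega) (by omega)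
  have hgd : g ∣ m - q := (Nat.gcd_dvd_left _ _).trans hGd
  have hgp : g ∣ p := by
    have := dvd_add (Nat.gcd_dvd_right G (p + q - m)) hgd
    rwa [show p + q - m + (m - q) = p by omega] at this
  have hd : HasPeriodOn f (m - q) 0 (p + q) :=
    (hg.extend_of_square hu hgp (by omega) (by omega)).of_dvd hgd
  exact (hd.union htail (by omega)).mono le_rfl (by omega)

theorem exists_shift_of_three_squares (hu : HasPeriodOn f p 0 (2 * p))
    (hU : HasPeriodOn f q 0 (2 * q)) (hx : HasPeriodOn f m 1 (2 * m + 1))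
    (hpq : p < q) (hmp : m ≠ p) (hmq : m ≠ q) (hm : m < 2 * p) :
    (∃ o, 0 < o ∧ HasPeriodOn f o 0 (2 * p + o)) ∨
      ∃ o, 0 < o ∧ HasPeriodOn f o 1 (2 * m + 1 + o) := by
  by_cases hq : 2 * p ≤ q
  · exact Or.inl ⟨q, by omega, hU.mono le_rfl (by omega)⟩
  by_cases hqm : 2 * m < q
  · exact Or.inr ⟨q, by omega, hU.mono (by omega) (by omega)⟩
  rcases hmq.lt_or_gt with hmq | hmq
  · exact Or.inr ⟨q - m, by omega,
      shift_of_three_squares_of_lt hu hU hx hpq (by omega) (by omega) hmp hmq⟩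
  · exact Or.inl ⟨m - q, by omega, shift_of_three_squares_of_gt hu hU hx hpq (by omega) hmq hm⟩

end ThreeSquares

section Occurrences

variable {y w : List α} {n k : ℕ}

theorem OccursAt.getElem?_eq {t : ℕ} (h : OccursAt y w (n + 1)) (ht : t < y.length) :
    w[n + t]? = y[t]? := by
  obtain ⟨a, b, rfl, ha⟩ := h
  rw [List.append_assoc, List.getElem?_append_right (by omega),
    show n + t - a.length = t by omega, List.getElem?_append_left ht]

theorem occursAt_of_getElem?_eq (hy : y ≠ []) (h : ∀ t < y.length, w[n + t]? = y[t]?) :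
    OccursAt y w (n + 1) := by
  obtain ⟨b, hb⟩ : y <+: w.drop n := List.prefix_iff_getElem?.2 fun t ht => by
    rw [List.getElem?_drop, h t ht, List.getElem?_eq_getElem ht]
  have hn : n < w.length := by
    by_contra! hn
    simp [List.drop_eq_nil_of_le hn, hy] at hb
  exact ⟨w.take n, b, by rw [List.append_assoc, hb, List.take_append_drop], by simp; omega⟩

theorem OccursAt.hasPeriodOn_square (h : OccursAt (y ++ y) w (n + k + 1)) :
    HasPeriodOn (fun j => w[n + j]?) y.length k (2 * y.length + k) := by
  intro j hj hjy
  change w[n + j]? = w[n + (j + y.length)]?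
  rw [show n + j = n + k + (j - k) by omega,
    show n + (j + y.length) = n + k + (j - k + y.length) by omega,
    h.getElem?_eq (by simp; omega), h.getElem?_eq (by simp; omega),
    List.getElem?_append_left (by omega), List.getElem?_append_right (by omega),
    Nat.add_sub_cancel]

theorem LastOccAt.not_hasPeriodOn {o : ℕ} (h : LastOccAt y w (n + k + 1)) (hy : y ≠ [])
    (ho : 0 < o) : ¬HasPeriodOn (fun j => w[n + j]?) o k (k + y.length + o) := by
  intro hper
  have hocc : OccursAt y w (n + k + o + 1) := occursAt_of_getElem?_eq hy fun t ht => by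
    calc w[n + k + o + t]? = w[n + (k + t + o)]? := by
          rw [show n + k + o + t = n + (k + t + o) by omega]
      _ = w[n + (k + t)]? := (hper (k + t) (by omega) (by omega)).symm
      _ = y[t]? := by rw [← Nat.add_assoc]; exact h.1.getElem?_eq ht
  have := h.2 _ hocc
  omega

end Occurrences

theorem stmt17_general {α : Type*} (w u U x : List α) (i : ℕ)
    (hu : u ≠ []) (hx : x ≠ []) (hlt : u.length < U.length)
    (hui : LastOccAt (u ++ u) w i) (hUi : LastOccAt (U ++ U) w i)
    (hxi : LastOccAt (x ++ x) w (i + 1)) :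
    x.length = u.length ∨ x.length = U.length ∨ 2 * u.length ≤ x.length := by
  by_contra! h
  obtain ⟨hxu, hxU, hx2⟩ := h
  obtain ⟨s, rfl⟩ : ∃ s, i = s + 1 := by
    obtain ⟨a, b, -, ha⟩ := hui.1
    exact ⟨a.length, ha.symm⟩
  rcases exists_shift_of_three_squares (hui.1.hasPeriodOn_square (k := 0))
      (hUi.1.hasPeriodOn_square (k := 0)) (hxi.1.hasPeriodOn_square (k := 1)) hlt hxu hxU hx2
    with ⟨o, ho, h⟩ | ⟨o, ho, h⟩
  · exact hui.not_hasPeriodOn (k := 0) (by simpa using hu) ho (h.mono le_rfl (by simp; omega))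
  · exact hxi.not_hasPeriodOn (k := 1) (by simpa using hx) ho (h.mono le_rfl (by simp; omega))

/-- If (u,U) is an FS-double-square beginning at position i and x² is a square with last
    occurrence beginning at position i+1, then |x| ∈ {|u|, |U|} or |x| ≥ 2|u|. -/
theorem stmt17 {α : Type*} (w u U x : List α) (i : ℕ)
    (hu : u ≠ []) (hU : U ≠ []) (hx : x ≠ []) (hlt : u.length < U.length)
    (hui : LastOccAt (u ++ u) w i) (hUi : LastOccAt (U ++ U) w i)
    (hxi : LastOccAt (x ++ x) w (i + 1)) :
    x.length = u.length ∨ x.length = U.length ∨ 2 * u.length ≤ x.length :=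
  stmt17_general w u U x i hu hx hlt hui hUi hxi
end

section
/- Let m ≥ 1 and suppose positions 1 through m of a word are all FS-double-square-positions with FS-double-squares (u_i, U_i) satisfying |u_1| = ⋯ = |u_m| and |U_1| = ⋯ = |U_m|. Then for all i in [1..m]: |U_i| + m ≤ 2|u_i|, |U_i| ≥ |u_i| + m + 1, and consequently |U_i| ≥ 3m + 2 and |u_i| ≥ 2m + 1. -/
variable {α : Type*}

/-! The squares `(u i)²` starting at positions `1, …, m` give the prefix of `w` of length
`2p + m - 1` the period `p = |u i|`; likewise the squares `(U i)²` give the prefix of length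
`2P + m - 1` the period `P = |U i|`. If `P + m > 2p`, the period `P` shifts `(u 1)²` to a later
occurrence. If `P ≤ p + m`, the Fine–Wilf periodicity lemma on the shorter prefix yields the period
`gcd p P`, which spreads to the longer prefix because it divides `P`; then the period `P - p` shifts
`(u 1)²` to a later occurrence. Both contradict the last occurrence of `(u 1)²` being at position 1.
-/

namespace List

theorem HasPeriod.of_dvd {v : List α} {g d : ℕ} (h : v.HasPeriod g) (hgd : g ∣ d) :
    v.HasPeriod d := by
  rw [hasPeriod_iff_forall_getElem?_mod] at h
  rw [hasPeriod_iff_getElem?]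
  intro i hi
  rw [h i (by omega), h (i + d) (by omega), Nat.add_mod, Nat.mod_eq_zero_of_dvd hgd,
    Nat.add_zero, Nat.mod_mod]

theorem HasPeriod.of_hasPeriod_take {v : List α} {P g k : ℕ} (hP : v.HasPeriod P)
    (hg : (v.take k).HasPeriod g) (hgP : g ∣ P) (hPpos : 0 < P) (hPk : P ≤ k) :
    v.HasPeriod g := by
  rw [hasPeriod_iff_forall_getElem?_mod] at hP hg ⊢
  intro i hi
  have hiP : i % P < P := Nat.mod_lt i hPpos
  have hig : i % P % g ≤ i % P := Nat.mod_le _ _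
  have hPi : i % P ≤ i := Nat.mod_le _ _
  calc v[i]? = v[i % P]? := hP i hi
    _ = (v.take k)[i % P]? := by rw [getElem?_take_of_lt (by omega)]
    _ = (v.take k)[i % P % g]? := hg _ (by simp only [length_take]; omega)
    _ = v[i % g]? := by rw [getElem?_take_of_lt (by omega), Nat.mod_mod_of_dvd _ hgP]

theorem HasPeriod.gcd_of_hasPeriod_take {v : List α} {p P k : ℕ} (hP : v.HasPeriod P)
    (hp : (v.take k).HasPeriod p) (hPpos : 0 < P) (hPk : P ≤ k) (hv : k ≤ v.length)
    (hk : p + P - p.gcd P ≤ k) : v.HasPeriod (p.gcd P) := by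
  have hPtake : (v.take k).HasPeriod P := hP.infix (v.take_prefix k).isInfix
  have hgcd := hp.gcd hPtake (by simp only [length_take]; omega)
  exact hP.of_hasPeriod_take hgcd (Nat.gcd_dvd_right p P) hPpos hPk

end List

theorem occursAt_succ_iff {x w : List α} {b : ℕ} :
    OccursAt x w (b + 1) ↔ b ≤ w.length ∧ x <+: w.drop b := by
  constructor
  · rintro ⟨u, v, rfl, hu⟩
    have hub : u.length = b := by omega
    refine ⟨by simp only [List.length_append]; omega, ?_⟩
    rw [List.append_assoc, List.drop_left' hub]
    exact List.prefix_append x v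
  · rintro ⟨hb, v, hv⟩
    refine ⟨w.take b, v, ?_, by simp only [List.length_take]; omega⟩
    rw [List.append_assoc, hv, List.take_append_drop]

theorem occursAt_one_iff {x w : List α} : OccursAt x w 1 ↔ x <+: w := by
  simpa using occursAt_succ_iff (x := x) (w := w) (b := 0)

theorem OccursAt.add_length_le {x w : List α} {i : ℕ} (h : OccursAt x w i) :
    i + x.length ≤ w.length + 1 := by
  obtain ⟨u, v, rfl, hu⟩ := h
  simp only [List.length_append]
  omega

theorem OccursAt.getElem?_add_length {y w : List α} {a j : ℕ}
    (h : OccursAt (y ++ y) w (a + 1)) (hj : j < y.length) :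
    w[a + j]? = w[a + y.length + j]? := by
  obtain ⟨u, v, rfl, hu⟩ := h
  obtain rfl : u.length = a := by omega
  simp only [List.append_assoc, Nat.add_assoc, List.getElem?_append_right, Nat.le_add_right,
    Nat.add_sub_cancel_left, List.getElem?_append_left hj]

theorem hasPeriod_take_of_squares {w : List α} {m L : ℕ} (hm : 1 ≤ m) (y : ℕ → List α)
    (hlen : ∀ i, 1 ≤ i → i ≤ m → (y i).length = L)
    (hocc : ∀ i, 1 ≤ i → i ≤ m → OccursAt (y i ++ y i) w i) :
    (w.take (2 * L + m - 1)).HasPeriod L := by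
  rcases Nat.eq_zero_or_pos L with rfl | hL
  · exact List.hasPeriod_zero _
  rw [List.hasPeriod_iff_getElem?]
  intro t ht
  simp only [List.length_take] at ht
  rw [List.getElem?_take_of_lt (by omega), List.getElem?_take_of_lt (by omega)]
  obtain ⟨a, j, rfl, ha, hj⟩ : ∃ a j, t = a + j ∧ a + 1 ≤ m ∧ j < L :=
    ⟨min t (m - 1), t - min t (m - 1), by omega, by omega, by omega⟩
  have h := (hocc (a + 1) (by omega) ha).getElem?_add_length (j := j)
  rw [hlen _ (by omega) ha, Nat.add_right_comm] at h
  exact h hj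

theorem OccursAt.shift_of_hasPeriod_take {x w : List α} {n b : ℕ} (hx : OccursAt x w 1)
    (hper : (w.take n).HasPeriod b) (hlen : x.length + b ≤ n) (hn : n ≤ w.length) :
    OccursAt x w (b + 1) := by
  have hxw : x <+: w.take n := by
    rw [List.prefix_take_iff]
    exact ⟨occursAt_one_iff.1 hx, by omega⟩
  have hxd : x <+: (w.take n).drop b := by
    refine List.prefix_of_prefix_length_le hxw hper.drop_prefix ?_
    simp only [List.length_drop, List.length_take]
    omega
  exact occursAt_succ_iff.2 ⟨by omega, hxd.trans ((List.take_prefix n w).drop b)⟩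

theorem LastOccAt.lt_length_add_of_hasPeriod_take {x w : List α} {n b : ℕ}
    (hx : LastOccAt x w 1) (hper : (w.take n).HasPeriod b) (hb : 0 < b) (hn : n ≤ w.length) :
    n < x.length + b := by
  by_contra! hlen
  have := hx.2 _ (hx.1.shift_of_hasPeriod_take hper hlen hn)
  omega

/-- If positions 1..m are FS-double-square-positions with FS-double-squares (uᵢ, Uᵢ) of
    preserved lengths, then |Uᵢ| + m ≤ 2|uᵢ|, |Uᵢ| ≥ |uᵢ| + m + 1, |Uᵢ| ≥ 3m+2 and
    |uᵢ| ≥ 2m+1. -/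
theorem stmt18 {α : Type*} (w : List α) (m : ℕ) (hm : 1 ≤ m)
    (u U : ℕ → List α)
    (hu : ∀ i, 1 ≤ i → i ≤ m → u i ≠ [])
    (hlt : ∀ i, 1 ≤ i → i ≤ m → (u i).length < (U i).length)
    (hlastu : ∀ i, 1 ≤ i → i ≤ m → LastOccAt (u i ++ u i) w i)
    (hlastU : ∀ i, 1 ≤ i → i ≤ m → LastOccAt (U i ++ U i) w i)
    (hequ : ∀ i, 1 ≤ i → i ≤ m → (u i).length = (u 1).length)
    (heqU : ∀ i, 1 ≤ i → i ≤ m → (U i).length = (U 1).length) :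
    ∀ i, 1 ≤ i → i ≤ m →
      (U i).length + m ≤ 2 * (u i).length ∧
      (u i).length + m + 1 ≤ (U i).length ∧
      3 * m + 2 ≤ (U i).length ∧
      2 * m + 1 ≤ (u i).length := by
  intro i hi him
  rw [hequ i hi him, heqU i hi him]
  set p := (u 1).length
  set P := (U 1).length
  have hp : 0 < p := List.length_pos_iff.2 (hu 1 le_rfl hm)
  have hpP : p < P := hlt 1 le_rfl hm
  have hw : 2 * P + m - 1 ≤ w.length := by
    have := (hlastU m hm le_rfl).1.add_length_le
    rw [List.length_append, heqU m hm le_rfl] at this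
    omega
  have hperP : (w.take (2 * P + m - 1)).HasPeriod P :=
    hasPeriod_take_of_squares hm U heqU fun i hi him => (hlastU i hi him).1
  have hperp : (w.take (2 * p + m - 1)).HasPeriod p :=
    hasPeriod_take_of_squares hm u hequ fun i hi him => (hlastu i hi him).1
  have hlast : LastOccAt (u 1 ++ u 1) w 1 := hlastu 1 le_rfl hm
  have hPm : P + m ≤ 2 * p := by
    have := hlast.lt_length_add_of_hasPeriod_take hperP (by omega) hw
    rw [List.length_append] at this
    omega
  have hpm : p + m + 1 ≤ P := by
    by_contra! hPp
    have hg : 0 < p.gcd P := Nat.gcd_pos_of_pos_left P hp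
    have hperd : (w.take (2 * P + m - 1)).HasPeriod (P - p) := by
      refine (hperP.gcd_of_hasPeriod_take (k := 2 * p + m - 1) ?_ (by omega) (by omega)
        (by simp only [List.length_take]; omega) (by omega)).of_dvd
        (Nat.dvd_sub (Nat.gcd_dvd_right p P) (Nat.gcd_dvd_left p P))
      rwa [List.take_take, min_eq_left (by omega)]
    have := hlast.lt_length_add_of_hasPeriod_take hperd (by omega) hw
    rw [List.length_append] at this
    omega
  omega
end
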